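/- arXiv:1809.03671 — 9 statements merged into one kernel-verified Lean document; each statement's English description precedes it below -/
import Mathlib

section
/- Let 0 < p₁ < p₂ < ⋯ < p_K ≤ 1 and 0 < P₁ < P₂ < ⋯ < P_K ≤ 1 define a 2-player stingy quantum race with Alice's payoff matrix A₀(i,j) = pᵢ if i < j and pᵢ(1-Pⱼ) if i ≥ j. If y is a mixed strategy of Bob and s < t are pure strategies such that {j ∈ supp(y) : j ≤ s} = {j ∈ supp(y) : j ≤ t}, then Alice's payoff from pure strategy t against y is strictly greater than her payoff from pure strategy s against y, i.e., e_t^T A₀ y > e_s^T A₀ y. -/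
open Finset

/-- Alice's payoff in the stingy race when she plays pure strategy `s`
against Bob's mixed strategy `y`:  `e_s^T A₀ y`. -/
noncomputable def stingyPayoffA (K : ℕ) (p P : ℕ → ℝ) (y : ℕ → ℝ) (s : ℕ) : ℝ :=
  p s * ∑ j ∈ Finset.Icc 1 K, y j * (if j ≤ s then 1 - P j else 1)

theorem stmt_3 (K : ℕ) (p P : ℕ → ℝ) (y : ℕ → ℝ) (s t : ℕ)
    (hp1 : 0 < p 1) (hpK : p K ≤ 1)
    (hpmono : ∀ i j, 1 ≤ i → i < j → j ≤ K → p i < p j)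
    (hP1 : 0 < P 1) (hPK : P K ≤ 1)
    (hPmono : ∀ i j, 1 ≤ i → i < j → j ≤ K → P i < P j)
    (hy0 : ∀ j, 0 ≤ y j) (hy1 : ∑ j ∈ Finset.Icc 1 K, y j = 1)
    (hs : 1 ≤ s) (hst : s < t) (htK : t ≤ K)
    (hsupp : ∀ j, s < j → j ≤ t → y j = 0) :
    stingyPayoffA K p P y s < stingyPayoffA K p P y t := by
  unfold stingyPayoffA
  have hPle : ∀ i, 1 ≤ i → i ≤ K → P i ≤ 1 := by
    intro i h1 hK
    rcases eq_or_lt_of_le hK with h | h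
    · subst h; exact hPK
    · exact le_of_lt (lt_of_lt_of_le (hPmono i K h1 h (le_refl K)) hPK)
  have hS : ∑ j ∈ Finset.Icc 1 K, y j * (if j ≤ s then 1 - P j else 1)
      = ∑ j ∈ Finset.Icc 1 K, y j * (if j ≤ t then 1 - P j else 1) := by
    apply Finset.sum_congr rfl
    intro j _
    by_cases h1 : j ≤ s
    · simp [h1, le_trans h1 hst.le]
    · by_cases h2 : j ≤ t
      · rw [hsupp j (lt_of_not_ge h1) h2]; ring
      · simp [h1, h2]
  rw [hS]
  have hpos : 0 < ∑ j ∈ Finset.Icc 1 K, y j * (if j ≤ t then 1 - P j else 1) := by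
    obtain ⟨j, hj, hyj⟩ : ∃ j ∈ Finset.Icc 1 K, 0 < y j := by
      by_contra h
      push_neg at h
      have : ∑ j ∈ Finset.Icc 1 K, y j = 0 :=
        Finset.sum_eq_zero fun j hj => le_antisymm (h j hj) (hy0 j)
      linarith [hy1]
    apply Finset.sum_pos'
    · intro i hi
      rw [Finset.mem_Icc] at hi
      by_cases h : i ≤ t
      · have : P i ≤ 1 := hPle i hi.1 hi.2
        rw [if_pos h]
        exact mul_nonneg (hy0 i) (by linarith)
      · rw [if_neg h]
        simpa using hy0 i
    · refine ⟨j, hj, ?_⟩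
      rw [Finset.mem_Icc] at hj
      by_cases h1 : j ≤ s
      · have hjK : j < K := lt_of_le_of_lt h1 (lt_of_lt_of_le hst htK)
        have : P j < 1 := lt_of_lt_of_le (hPmono j K hj.1 hjK (le_refl K)) hPK
        rw [if_pos (le_trans h1 hst.le)]
        exact mul_pos hyj (by linarith)
      · by_cases h2 : j ≤ t
        · exact absurd (hsupp j (lt_of_not_ge h1) h2) (ne_of_gt hyj)
        · rw [if_neg h2]; simpa using hyj
  exact mul_lt_mul_of_pos_right (hpmono s t hs hst htK) hpos
end

section
/- Let 0 < p₁ < ⋯ < p_K ≤ 1 and 0 < P₁ < ⋯ < P_K ≤ 1 define a 2-player stingy quantum race. If (x,y) is a Nash equilibrium, then supp(x) ∪ supp(y) is an interval of integers containing K, i.e., equal to {T, T+1, …, K} for some 1 ≤ T ≤ K. -/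
/-!
Against a fixed mixed strategy `y`, Alice's payoff for the pure strategy `i` is
`p i * (1 - ∑_{j ≤ i} y j * P j)`, and the bracket is positive for `i < K` because the weighted
sum is at most `P i < 1`. So if Bob never plays `t + 1`, moving from `t` to `t + 1` strictly
increases Alice's payoff, and `t` cannot be a best response. Hence every `t < K` in the support of
one player is followed by `t + 1` in the support of the other, so the joint support is closed
upwards in `[1, K]`. Since `payoffB K p P = payoffA K P p`, Bob's side is the same statement.
-/

open Finset

/-- Alice's payoff `e_i^T A₀ y` in the 2-player stingy quantum race. -/
noncomputable def payoffA (K : ℕ) (p P : ℕ → ℝ) (y : ℕ → ℝ) (i : ℕ) : ℝ :=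
  p i * ∑ j ∈ Finset.Icc 1 K, y j * (if j ≤ i then 1 - P j else 1)

/-- Bob's payoff `x^T B₀ e_j` in the 2-player stingy quantum race. -/
noncomputable def payoffB (K : ℕ) (p P : ℕ → ℝ) (x : ℕ → ℝ) (j : ℕ) : ℝ :=
  P j * ∑ i ∈ Finset.Icc 1 K, x i * (if i ≤ j then 1 - p i else 1)

theorem payoffB_eq_payoffA (K : ℕ) (p P x : ℕ → ℝ) : payoffB K p P x = payoffA K P p x := rfl

theorem payoffA_eq {K : ℕ} (p P : ℕ → ℝ) {y : ℕ → ℝ} (hy1 : ∑ j ∈ Icc 1 K, y j = 1)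
    {i : ℕ} (hi : i ≤ K) :
    payoffA K p P y i = p i * (1 - ∑ j ∈ Icc 1 i, y j * P j) := by
  have hfilter : {j ∈ Icc 1 K | j ≤ i} = Icc 1 i := by
    ext j
    simp only [mem_filter, mem_Icc]
    omega
  have hsplit : ∀ j, y j * (if j ≤ i then 1 - P j else 1) = y j - if j ≤ i then y j * P j else 0 :=
    fun j => by split_ifs <;> ring
  simp only [payoffA, hsplit, sum_sub_distrib, hy1, ← sum_filter, hfilter]

theorem sum_mul_le_of_le {ι : Type*} {s : Finset ι} {w f : ι → ℝ} {M : ℝ}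
    (hw0 : ∀ i ∈ s, 0 ≤ w i) (hw1 : ∑ i ∈ s, w i ≤ 1) (hf : ∀ i ∈ s, f i ≤ M) (hM : 0 ≤ M) :
    ∑ i ∈ s, w i * f i ≤ M :=
  calc ∑ i ∈ s, w i * f i
      ≤ ∑ i ∈ s, w i * M := sum_le_sum fun i hi => mul_le_mul_of_nonneg_left (hf i hi) (hw0 i hi)
    _ = (∑ i ∈ s, w i) * M := (sum_mul ..).symm
    _ ≤ M := mul_le_of_le_one_left hM hw1

theorem payoffA_lt_payoffA_succ {K : ℕ} {p P y : ℕ → ℝ}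
    {t : ℕ} (ht : 1 ≤ t) (htK : t < K) (hpt : p t < p (t + 1))
    (hP : StrictMonoOn P (Set.Icc 1 K)) (hP1 : 0 < P 1) (hPK : P K ≤ 1)
    (hy0 : ∀ j, 0 ≤ y j) (hy1 : ∑ j ∈ Icc 1 K, y j = 1) (hyt : y (t + 1) = 0) :
    payoffA K p P y t < payoffA K p P y (t + 1) := by
  have htK' : t ∈ Set.Icc 1 K := ⟨ht, htK.le⟩
  have hmassle : ∑ j ∈ Icc 1 t, y j ≤ 1 :=
    hy1 ▸ sum_le_sum_of_subset_of_nonneg (Icc_subset_Icc_right htK.le) fun j _ _ => hy0 j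
  have hPt : 0 < P t := hP1.trans_le <| hP.monotoneOn ⟨le_rfl, ht.trans htK.le⟩ htK' ht
  have hsum_le : ∑ j ∈ Icc 1 t, y j * P j ≤ P t :=
    sum_mul_le_of_le (fun j _ => hy0 j) hmassle
      (fun j hj => hP.monotoneOn ⟨(mem_Icc.1 hj).1, (mem_Icc.1 hj).2.trans htK.le⟩ htK'
        (mem_Icc.1 hj).2) hPt.le
  have hsum_lt : ∑ j ∈ Icc 1 t, y j * P j < 1 :=
    hsum_le.trans_lt <| (hP htK' ⟨ht.trans htK.le, le_rfl⟩ htK).trans_le hPK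
  have hsum_succ : ∑ j ∈ Icc 1 (t + 1), y j * P j = ∑ j ∈ Icc 1 t, y j * P j := by
    rw [sum_Icc_succ_top (by omega), hyt, zero_mul, add_zero]
  rw [payoffA_eq p P hy1 htK.le, payoffA_eq p P hy1 htK, hsum_succ]
  exact mul_lt_mul_of_pos_right hpt (by linarith)

theorem pos_succ_of_forall_payoffA_le {K : ℕ} {p P y : ℕ → ℝ}
    {t : ℕ} (ht : 1 ≤ t) (htK : t < K) (hpt : p t < p (t + 1))
    (hP : StrictMonoOn P (Set.Icc 1 K)) (hP1 : 0 < P 1) (hPK : P K ≤ 1)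
    (hy0 : ∀ j, 0 ≤ y j) (hy1 : ∑ j ∈ Icc 1 K, y j = 1)
    (hbest : ∀ i ∈ Icc 1 K, payoffA K p P y i ≤ payoffA K p P y t) :
    0 < y (t + 1) := by
  refine (hy0 _).lt_of_ne fun hyt => ?_
  exact (payoffA_lt_payoffA_succ ht htK hpt hP hP1 hPK hy0 hy1 hyt.symm).not_ge
    (hbest _ (mem_Icc.2 ⟨by omega, htK⟩))

theorem exists_eq_Icc_of_succ {K : ℕ} {S : ℕ → Prop}
    (hstep : ∀ t, 1 ≤ t → t < K → S t → S (t + 1)) (hne : ∃ t ∈ Icc 1 K, S t) :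
    ∃ T, 1 ≤ T ∧ T ≤ K ∧ ∀ j, (j ∈ Icc 1 K ∧ S j) ↔ j ∈ Icc T K := by
  classical
  have hex : ∃ t, t ∈ Icc 1 K ∧ S t := by simpa using hne
  obtain ⟨hTmem, hST⟩ := Nat.find_spec hex
  obtain ⟨hT1, hTK⟩ := mem_Icc.1 hTmem
  have hup : ∀ j, Nat.find hex ≤ j → j ≤ K → S j := by
    intro j hj
    induction j, hj using Nat.le_induction with
    | base => exact fun _ => hST
    | succ n hn ih => exact fun hnK => hstep n (hT1.trans hn) (by omega) (ih (by omega))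
  refine ⟨Nat.find hex, hT1, hTK, fun j => ⟨fun hj => ?_, fun hj => ?_⟩⟩
  · exact mem_Icc.2 ⟨Nat.find_min' hex hj, (mem_Icc.1 hj.1).2⟩
  · obtain ⟨hTj, hjK⟩ := mem_Icc.1 hj
    exact ⟨mem_Icc.2 ⟨hT1.trans hTj, hjK⟩, hup j hTj hjK⟩

theorem stmt_4_general (K : ℕ) (p P : ℕ → ℝ) (x y : ℕ → ℝ)
    (hp1 : 0 < p 1) (hpK : p K ≤ 1)
    (hpmono : ∀ i j, 1 ≤ i → i < j → j ≤ K → p i < p j)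
    (hP1 : 0 < P 1) (hPK : P K ≤ 1)
    (hPmono : ∀ i j, 1 ≤ i → i < j → j ≤ K → P i < P j)
    (hx0 : ∀ i, 0 ≤ x i) (hx1 : ∑ i ∈ Finset.Icc 1 K, x i = 1)
    (hy0 : ∀ j, 0 ≤ y j) (hy1 : ∑ j ∈ Finset.Icc 1 K, y j = 1)
    -- Nash equilibrium: every strategy in the support is a best response
    (hNEx : ∀ i ∈ Finset.Icc 1 K, 0 < x i →
      ∀ i' ∈ Finset.Icc 1 K, payoffA K p P y i' ≤ payoffA K p P y i)
    (hNEy : ∀ j ∈ Finset.Icc 1 K, 0 < y j →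
      ∀ j' ∈ Finset.Icc 1 K, payoffB K p P x j' ≤ payoffB K p P x j) :
    ∃ T, 1 ≤ T ∧ T ≤ K ∧
      ∀ j, (j ∈ Finset.Icc 1 K ∧ (0 < x j ∨ 0 < y j)) ↔ j ∈ Finset.Icc T K := by
  have hp : StrictMonoOn p (Set.Icc 1 K) := fun i hi j hj hij => hpmono i j hi.1 hij hj.2
  have hP : StrictMonoOn P (Set.Icc 1 K) := fun i hi j hj hij => hPmono i j hi.1 hij hj.2
  refine exists_eq_Icc_of_succ ?_ ?_
  · rintro t ht htK (hxt | hyt)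
    · refine Or.inr <| pos_succ_of_forall_payoffA_le ht htK
        (hpmono t (t + 1) ht t.lt_succ_self htK) hP hP1 hPK hy0 hy1 ?_
      exact hNEx t (mem_Icc.2 ⟨ht, htK.le⟩) hxt
    · refine Or.inl <| pos_succ_of_forall_payoffA_le ht htK
        (hPmono t (t + 1) ht t.lt_succ_self htK) hp hp1 hpK hx0 hx1 ?_
      simpa only [payoffB_eq_payoffA] using hNEy t (mem_Icc.2 ⟨ht, htK.le⟩) hyt
  · obtain ⟨i, hi, hxi⟩ := exists_ne_zero_of_sum_ne_zero (hx1.trans_ne one_ne_zero)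
    exact ⟨i, hi, Or.inl ((hx0 i).lt_of_ne' hxi)⟩

theorem stmt_4 (K : ℕ) (p P : ℕ → ℝ) (x y : ℕ → ℝ)
    (hK : 2 ≤ K)
    (hp1 : 0 < p 1) (hpK : p K ≤ 1)
    (hpmono : ∀ i j, 1 ≤ i → i < j → j ≤ K → p i < p j)
    (hP1 : 0 < P 1) (hPK : P K ≤ 1)
    (hPmono : ∀ i j, 1 ≤ i → i < j → j ≤ K → P i < P j)
    (hx0 : ∀ i, 0 ≤ x i) (hx1 : ∑ i ∈ Finset.Icc 1 K, x i = 1)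
    (hy0 : ∀ j, 0 ≤ y j) (hy1 : ∑ j ∈ Finset.Icc 1 K, y j = 1)
    (hxsupp : ∀ i, x i ≠ 0 → i ∈ Finset.Icc 1 K)
    (hysupp : ∀ j, y j ≠ 0 → j ∈ Finset.Icc 1 K)
    -- Nash equilibrium: every strategy in the support is a best response
    (hNEx : ∀ i ∈ Finset.Icc 1 K, 0 < x i →
      ∀ i' ∈ Finset.Icc 1 K, payoffA K p P y i' ≤ payoffA K p P y i)
    (hNEy : ∀ j ∈ Finset.Icc 1 K, 0 < y j →
      ∀ j' ∈ Finset.Icc 1 K, payoffB K p P x j' ≤ payoffB K p P x j) :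
    ∃ T, 1 ≤ T ∧ T ≤ K ∧
      ∀ j, (j ∈ Finset.Icc 1 K ∧ (0 < x j ∨ 0 < y j)) ↔ j ∈ Finset.Icc T K :=
  stmt_4_general K p P x y hp1 hpK hpmono hP1 hPK hPmono hx0 hx1 hy0 hy1 hNEx hNEy
end

section
/- Let 0 < p₁ < ⋯ < p_K ≤ 1 define a symmetric stingy quantum race with unique coinciding Nash equilibrium (x,x) supported on {T*, ..., K}, where x_t = r_{T*}/z_{T*} for t = T* and x_t = q_t/z_{T*} for T* < t ≤ K. Then z_{T*} = 1 + √(1 + 1/p_K² + σ(T*)), where σ(T) = p_T² r_T² + Σ_{i=T+1}^K p_i² q_i². In particular, 1/z_{T*} ≤ √2 − 1. -/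
/-!
Write `A = ∑_{i > T*} q_i`. Since `q_i = b_i (a_i - b_i)` with `a_i = 1/p_{i-1}`, `b_i = 1/p_i`,
both `(1 - p_i) q_i = q_i - (a_i - b_i)` and `p_i² q_i² = a_i² - b_i² - 2 q_i` telescope, giving
`(1 - p_{T*}) r_{T*} = 1/p_{T*} - A` and `σ(T*) = p_{T*}² r_{T*}² + 1/p_{T*}² - 1/p_K² - 2A`.
Hence `z_{T*} = 1/p_{T*} + p_{T*} r_{T*} > 0`, and expanding `(z_{T*} - 1)²` gives
`1 + 1/p_K² + σ(T*)`, which is at least `2` because `p_K ≤ 1`.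
-/

open Finset

lemma sum_Icc_succ_sub_telescope (g : ℕ → ℝ) {a b : ℕ} (hab : a ≤ b) :
    ∑ i ∈ Icc (a + 1) b, (g (i - 1) - g i) = g a - g b := by
  induction b, hab using Nat.le_induction with
  | base => simp
  | succ b hb ih =>
    rw [sum_Icc_succ_top (by omega), ih, Nat.add_sub_cancel]
    ring

section StingyWeights

variable {p q : ℕ → ℝ} {T K : ℕ}

lemma sum_one_sub_mul_stingy_weight (hTK : T ≤ K) (hp : ∀ i ∈ Icc (T + 1) K, p i ≠ 0)
    (hq : ∀ i ∈ Icc (T + 1) K, q i = 1 / p i * (1 / p (i - 1) - 1 / p i)) :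
    ∑ i ∈ Icc (T + 1) K, (1 - p i) * q i = ∑ i ∈ Icc (T + 1) K, q i - (1 / p T - 1 / p K) := by
  rw [← sum_Icc_succ_sub_telescope (fun i => 1 / p i) hTK, ← sum_sub_distrib]
  refine sum_congr rfl fun i hi => ?_
  rw [hq i hi]
  field_simp [hp i hi]

lemma sum_sq_mul_sq_stingy_weight (hTK : T ≤ K) (hp : ∀ i ∈ Icc (T + 1) K, p i ≠ 0)
    (hq : ∀ i ∈ Icc (T + 1) K, q i = 1 / p i * (1 / p (i - 1) - 1 / p i)) :
    ∑ i ∈ Icc (T + 1) K, p i ^ 2 * q i ^ 2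
      = (1 / p T) ^ 2 - (1 / p K) ^ 2 - 2 * ∑ i ∈ Icc (T + 1) K, q i := by
  rw [← sum_Icc_succ_sub_telescope (fun i => (1 / p i) ^ 2) hTK, mul_sum, ← sum_sub_distrib]
  refine sum_congr rfl fun i hi => ?_
  rw [hq i hi]
  field_simp [hp i hi]
  ring

end StingyWeights

lemma eq_one_add_sqrt_of_sq_sub_one_eq {z c : ℝ} (hz : 0 < z) (hc : 1 ≤ c)
    (h : (z - 1) ^ 2 = c) : z = 1 + √c := by
  have hz1 : 0 ≤ z - 1 := by nlinarith
  rw [← h, Real.sqrt_sq hz1]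
  ring

lemma one_div_one_add_sqrt_le {c : ℝ} (hc : 2 ≤ c) : 1 / (1 + √c) ≤ √2 - 1 := by
  have h2 : √2 ≤ √c := Real.sqrt_le_sqrt hc
  have hs2 : √2 ^ 2 = 2 := Real.sq_sqrt zero_le_two
  rw [div_le_iff₀ (by positivity)]
  nlinarith [Real.sqrt_nonneg 2]

theorem stmt_6_general (K : ℕ) (p q r z σ : ℕ → ℝ) (Tstar : ℕ)
    (hp1 : 0 < p 1) (hpK : p K ≤ 1)
    (hpmono : ∀ i j, 1 ≤ i → i < j → j ≤ K → p i < p j)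
    (hq : ∀ i, q i = (1 / p i) * (1 / p (i-1) - 1 / p i))
    (hr : ∀ T, r T = (1 / (1 - p T)) *
      (1 / p K - ∑ i ∈ Finset.Icc (T+1) K, (1 - p i) * q i))
    (hz : ∀ T, z T = r T + ∑ i ∈ Finset.Icc (T+1) K, q i)
    (hσ : ∀ T, σ T = (p T)^2 * (r T)^2 + ∑ i ∈ Finset.Icc (T+1) K, (p i)^2 * (q i)^2)
    (hT1 : 1 ≤ Tstar) (hT2 : Tstar ≤ K) (hT3 : 0 < r Tstar) :
    z Tstar = 1 + Real.sqrt (1 + 1 / (p K)^2 + σ Tstar) ∧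
    1 / z Tstar ≤ Real.sqrt 2 - 1 := by
  have hp : ∀ i, 1 ≤ i → i ≤ K → 0 < p i := fun i h1 h2 =>
    (eq_or_lt_of_le h1).elim (fun h => h ▸ hp1) fun h => hp1.trans (hpmono 1 i le_rfl h h2)
  have hp_ne : ∀ i ∈ Icc (Tstar + 1) K, p i ≠ 0 := fun i hi => by
    obtain ⟨hi1, hi2⟩ := mem_Icc.1 hi
    exact (hp i (by omega) hi2).ne'
  have hpT : 0 < p Tstar := hp Tstar hT1 hT2
  have hpK0 : 0 < p K := hp K (by omega) le_rfl
  -- `p_{T*} = 1` would make `r_{T*} = 0` through `1 / 0 = 0`.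
  have hpT1 : 1 - p Tstar ≠ 0 := fun h => hT3.ne' (by rw [hr, h]; simp)
  have hq_supp : ∀ i ∈ Icc (Tstar + 1) K, q i = 1 / p i * (1 / p (i - 1) - 1 / p i) := fun i _ => hq i
  have hA : ∑ i ∈ Icc (Tstar + 1) K, q i = 1 / p Tstar - (1 - p Tstar) * r Tstar := by
    rw [hr, sum_one_sub_mul_stingy_weight hT2 hp_ne hq_supp]
    field_simp
    ring
  have hz_eq : z Tstar = 1 / p Tstar + p Tstar * r Tstar := by rw [hz, hA]; ring
  have key : (z Tstar - 1) ^ 2 = 1 + 1 / p K ^ 2 + σ Tstar := by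
    rw [hz, hσ, sum_sq_mul_sq_stingy_weight hT2 hp_ne hq_supp, hA]
    field_simp
    ring
  have hσ_nonneg : 0 ≤ σ Tstar := by rw [hσ]; positivity
  have hpK_inv : 1 ≤ 1 / p K ^ 2 := one_le_one_div (by positivity) (pow_le_one₀ hpK0.le hpK)
  have hz_eq_sqrt := eq_one_add_sqrt_of_sq_sub_one_eq (by rw [hz_eq]; positivity) (by linarith) key
  exact ⟨hz_eq_sqrt, hz_eq_sqrt ▸ one_div_one_add_sqrt_le (by linarith)⟩

theorem stmt_6 (K : ℕ) (p q r z σ : ℕ → ℝ) (Tstar : ℕ)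
    (hK : 2 ≤ K)
    (hp1 : 0 < p 1) (hpK : p K ≤ 1)
    (hpmono : ∀ i j, 1 ≤ i → i < j → j ≤ K → p i < p j)
    (hq : ∀ i, q i = (1 / p i) * (1 / p (i-1) - 1 / p i))
    (hr : ∀ T, r T = (1 / (1 - p T)) *
      (1 / p K - ∑ i ∈ Finset.Icc (T+1) K, (1 - p i) * q i))
    (hz : ∀ T, z T = r T + ∑ i ∈ Finset.Icc (T+1) K, q i)
    (hσ : ∀ T, σ T = (p T)^2 * (r T)^2 + ∑ i ∈ Finset.Icc (T+1) K, (p i)^2 * (q i)^2)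
    (hT1 : 1 ≤ Tstar) (hT2 : Tstar ≤ K) (hT3 : 0 < r Tstar)
    (hT4 : ∀ T, 1 ≤ T → T < Tstar → r T ≤ 0) :
    z Tstar = 1 + Real.sqrt (1 + 1 / (p K)^2 + σ Tstar) ∧
    1 / z Tstar ≤ Real.sqrt 2 - 1 :=
  stmt_6_general K p q r z σ Tstar hp1 hpK hpmono hq hr hz hσ hT1 hT2 hT3
end

section
/- Let 0 < p₁ < ⋯ < p_K ≤ 1 define a symmetric stingy quantum race with coinciding equilibrium starting point T* ≥ 2. Then p_{T*−1} ≤ √2 − 1. -/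
/-!
Write `a i = 1 / p i`. Since `T* - 1` is not a best response, `r (T* - 1) ≤ 0`, that is,
`a K ≤ ∑_{i = T*}^{K} (1 - p i) q i`. Each term equals `(a i - 1) (a (i-1) - a i)`, which differs
from `f (a (i-1)) - f (a i)`, for `f x = x² / 2 - x`, by `-(a (i-1) - a i)² / 2`; so the sum
telescopes to at most `f (a (T* - 1)) - f (a K)`. As `a K ≥ 1` this forces
`a (T* - 1)² - 2 a (T* - 1) ≥ 1`, i.e. `a (T* - 1) ≥ 1 + √2`.
-/

open Finset

lemma Finset.sum_Icc_succ_le_sub {f g : ℕ → ℝ} {m n : ℕ} (hmn : m ≤ n)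
    (h : ∀ i ∈ Icc (m + 1) n, g i ≤ f (i - 1) - f i) :
    ∑ i ∈ Icc (m + 1) n, g i ≤ f m - f n := by
  induction n, hmn using Nat.le_induction with
  | base => simp
  | succ n hmn ih =>
    rw [sum_Icc_succ_top (by omega)]
    have hlast := h (n + 1) (by rw [mem_Icc]; omega)
    have hrest := ih fun i hi => h i (by rw [mem_Icc] at hi ⊢; omega)
    simp only [Nat.add_sub_cancel] at hlast
    linarith

lemma one_sub_mul_mul_sub_one_div_le {p p' : ℝ} (hp : p ≠ 0) :
    (1 - p) * (1 / p * (1 / p' - 1 / p)) ≤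
      ((1 / p') ^ 2 / 2 - 1 / p') - ((1 / p) ^ 2 / 2 - 1 / p) := by
  have key : (1 - p) * (1 / p * (1 / p' - 1 / p)) = (1 / p - 1) * (1 / p' - 1 / p) := by
    field_simp
  rw [key]
  nlinarith [sq_nonneg (1 / p' - 1 / p)]

lemma le_sqrt_two_sub_one_of_sq_add_two_mul_le_one {x : ℝ} (h : x ^ 2 + 2 * x ≤ 1) :
    x ≤ √2 - 1 := by
  have : |x + 1| ≤ √2 := Real.abs_le_sqrt (by linarith)
  linarith [le_abs_self (x + 1)]

theorem stmt_7_general (K : ℕ) (p q r : ℕ → ℝ) (Tstar : ℕ)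
    (hp1 : 0 < p 1) (hpK : p K ≤ 1)
    (hpmono : ∀ i j, 1 ≤ i → i < j → j ≤ K → p i < p j)
    (hq : ∀ i, q i = (1 / p i) * (1 / p (i-1) - 1 / p i))
    (hr : ∀ T, r T = (1 / (1 - p T)) *
      (1 / p K - ∑ i ∈ Finset.Icc (T+1) K, (1 - p i) * q i))
    (hT2 : Tstar ≤ K)
    (hT4 : ∀ T, 1 ≤ T → T < Tstar → r T ≤ 0)
    (hT5 : 2 ≤ Tstar) :
    p (Tstar - 1) ≤ Real.sqrt 2 - 1 := by
  set S := Tstar - 1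
  have hpos : ∀ i, 1 ≤ i → i ≤ K → 0 < p i := fun i h1 h2 =>
    h1.eq_or_lt.elim (fun h => h ▸ hp1) fun h => hp1.trans (hpmono 1 i le_rfl h h2)
  have hpS : 0 < p S := hpos S (by omega) (by omega)
  have hpK0 : 0 < p K := hpos K (by omega) le_rfl
  have hpS1 : p S < 1 := (hpmono S K (by omega) (by omega) le_rfl).trans_le hpK
  have hbound : 1 / p K ≤ ∑ i ∈ Icc (S + 1) K, (1 - p i) * q i := by
    have hrS := hT4 S (by omega) (by omega)
    rw [hr S] at hrS
    have := nonpos_of_mul_nonpos_right hrS (one_div_pos.2 (by linarith))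
    linarith
  have htele : ∑ i ∈ Icc (S + 1) K, (1 - p i) * q i ≤
      ((1 / p S) ^ 2 / 2 - 1 / p S) - ((1 / p K) ^ 2 / 2 - 1 / p K) :=
    sum_Icc_succ_le_sub (f := fun i => (1 / p i) ^ 2 / 2 - 1 / p i) (by omega) fun i hi => by
      rw [hq i]
      exact one_sub_mul_mul_sub_one_div_le (hpos i (by rw [mem_Icc] at hi; omega) (mem_Icc.1 hi).2).ne'
  have haK : 1 ≤ 1 / p K := by rw [le_div_iff₀ hpK0]; linarith
  apply le_sqrt_two_sub_one_of_sq_add_two_mul_le_one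
  have haS : 1 + 2 * (1 / p S) ≤ (1 / p S) ^ 2 := by nlinarith
  calc p S ^ 2 + 2 * p S = p S ^ 2 * (1 + 2 * (1 / p S)) := by field_simp
    _ ≤ p S ^ 2 * (1 / p S) ^ 2 := by gcongr
    _ = 1 := by field_simp

theorem stmt_7 (K : ℕ) (p q r z : ℕ → ℝ) (Tstar : ℕ)
    (hK : 2 ≤ K)
    (hp1 : 0 < p 1) (hpK : p K ≤ 1)
    (hpmono : ∀ i j, 1 ≤ i → i < j → j ≤ K → p i < p j)
    (hq : ∀ i, q i = (1 / p i) * (1 / p (i-1) - 1 / p i))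
    (hr : ∀ T, r T = (1 / (1 - p T)) *
      (1 / p K - ∑ i ∈ Finset.Icc (T+1) K, (1 - p i) * q i))
    (hz : ∀ T, z T = r T + ∑ i ∈ Finset.Icc (T+1) K, q i)
    (hT1 : 1 ≤ Tstar) (hT2 : Tstar ≤ K) (hT3 : 0 < r Tstar)
    (hT4 : ∀ T, 1 ≤ T → T < Tstar → r T ≤ 0)
    (hT5 : 2 ≤ Tstar) :
    p (Tstar - 1) ≤ Real.sqrt 2 - 1 :=
  stmt_7_general K p q r Tstar hp1 hpK hpmono hq hr hT2 hT4 hT5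
end

section
/- Let p₁ < p₂ < ⋯ < p_K ≤ 1 be an ℓ-dense sequence (p₁ ≤ ℓ/K, p_K ≥ 1−ℓ/K, and p_{i+1}−p_i ≤ ℓ/K for all i) with K ≥ 6ℓ. Then p_{T*} > 5/21, where T* is the starting point of the coinciding equilibrium of the associated symmetric stingy quantum race. In particular T* ≥ 2. -/
/-!
Suppose `p_{T*} ≤ 5/21`. Let `M ≥ T*` be the last index before the sequence crosses `1/2`;
density gives `p_M > 1/2 - 1/6 = 1/3`. For `p_i ≤ 1/2` the factor `1/p_i - 1` is at least `1`, so
the terms `(1/p_i - 1)(1/p_{i-1} - 1/p_i)` with `T* < i ≤ M` telescope to at least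
`1/p_{T*} - 1/p_M > 21/5 - 3 = 6/5`, while all other terms are nonnegative. But `r_{T*} > 0` says
the whole sum is below `1/p_K ≤ 6/5`, as `p_K ≥ 5/6`.
-/

open Finset

lemma Nat.exists_last_before_of_not {P : ℕ → Prop} {T K : ℕ} (hTK : T ≤ K) (hT : P T) (hK : ¬ P K) :
    ∃ M, T ≤ M ∧ M < K ∧ P M ∧ ¬ P (M + 1) := by
  induction K, hTK using Nat.le_induction with
  | base => exact absurd hT hK
  | succ n hn ih =>
    by_cases hn' : P n
    · exact ⟨n, hn, n.lt_succ_self, hn', hK⟩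
    · obtain ⟨M, hTM, hMn, hM⟩ := ih hn'
      exact ⟨M, hTM, hMn.trans n.lt_succ_self, hM⟩

lemma sum_Icc_succ_sub_eq (f : ℕ → ℝ) {T M : ℕ} (h : T ≤ M) :
    ∑ i ∈ Icc (T + 1) M, (f (i - 1) - f i) = f T - f M := by
  induction M, h using Nat.le_induction with
  | base => simp
  | succ n hn ih =>
    rw [sum_Icc_succ_top (by omega), ih, Nat.add_sub_cancel]
    ring

lemma mul_one_div_sub_one_div_nonneg {a b : ℝ} (ha : 0 < a) (hab : a ≤ b) (hb : b ≤ 1) :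
    0 ≤ (1 / b - 1) * (1 / a - 1 / b) := by
  have hb0 : 0 < b := ha.trans_le hab
  apply mul_nonneg
  · rw [sub_nonneg, le_div_iff₀ hb0]
    linarith
  · exact sub_nonneg.2 (one_div_le_one_div_of_le ha hab)

lemma one_div_sub_one_div_le_mul {a b : ℝ} (ha : 0 < a) (hab : a ≤ b) (hb : b ≤ 1 / 2) :
    1 / a - 1 / b ≤ (1 / b - 1) * (1 / a - 1 / b) := by
  have hb0 : 0 < b := ha.trans_le hab
  have hdiff : 0 ≤ 1 / a - 1 / b := sub_nonneg.2 (one_div_le_one_div_of_le ha hab)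
  have hinv : 2 ≤ 1 / b := by
    rw [le_div_iff₀ hb0]
    linarith
  nlinarith

lemma one_sub_mul_one_div_mul {b : ℝ} (hb : b ≠ 0) (c : ℝ) :
    (1 - b) * (1 / b * c) = (1 / b - 1) * c := by
  rw [← mul_assoc, sub_mul, one_mul, mul_one_div_cancel hb]

lemma one_div_sub_one_div_le_sum {p : ℕ → ℝ} {T M K : ℕ} (hTM : T ≤ M) (hMK : M ≤ K)
    (hpos : 0 < p T) (hmono : MonotoneOn p (Set.Icc T K)) (hpK : p K ≤ 1) (hpM : p M ≤ 1 / 2) :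
    1 / p T - 1 / p M ≤ ∑ i ∈ Icc (T + 1) K, (1 / p i - 1) * (1 / p (i - 1) - 1 / p i) := by
  have hstep : ∀ i ∈ Icc (T + 1) K, 0 < p (i - 1) ∧ p (i - 1) ≤ p i := fun i hi => by
    rw [mem_Icc] at hi
    exact ⟨hpos.trans_le (hmono ⟨le_rfl, by omega⟩ ⟨by omega, by omega⟩ (by omega)),
      hmono ⟨by omega, by omega⟩ ⟨by omega, hi.2⟩ (by omega)⟩
  calc 1 / p T - 1 / p M = ∑ i ∈ Icc (T + 1) M, (1 / p (i - 1) - 1 / p i) :=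
        (sum_Icc_succ_sub_eq (fun i => 1 / p i) hTM).symm
    _ ≤ ∑ i ∈ Icc (T + 1) M, (1 / p i - 1) * (1 / p (i - 1) - 1 / p i) := by
        refine sum_le_sum fun i hi => ?_
        obtain ⟨h0, hle⟩ := hstep i (Icc_subset_Icc_right hMK hi)
        rw [mem_Icc] at hi
        exact one_div_sub_one_div_le_mul h0 hle ((hmono ⟨by omega, by omega⟩ ⟨hTM, hMK⟩ hi.2).trans hpM)
    _ ≤ ∑ i ∈ Icc (T + 1) K, (1 / p i - 1) * (1 / p (i - 1) - 1 / p i) := by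
        refine sum_le_sum_of_subset_of_nonneg (Icc_subset_Icc_right hMK) fun i hi _ => ?_
        obtain ⟨h0, hle⟩ := hstep i hi
        rw [mem_Icc] at hi
        exact mul_one_div_sub_one_div_nonneg h0 hle
          ((hmono ⟨by omega, hi.2⟩ ⟨by omega, le_rfl⟩ hi.2).trans hpK)

theorem stmt_8_general (K : ℕ) (ℓ : ℝ) (p q r : ℕ → ℝ) (Tstar : ℕ)
    (hp1 : 0 < p 1) (hpK : p K ≤ 1)
    (hpmono : ∀ i j, 1 ≤ i → i < j → j ≤ K → p i < p j)
    (hℓ : 0 < ℓ)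
    (hdense1 : p 1 ≤ ℓ / K)
    (hdense2 : p K ≥ 1 - ℓ / K)
    (hdense3 : ∀ i, 1 ≤ i → i ≤ K - 1 → p (i+1) - p i ≤ ℓ / K)
    (hK6 : 6 * ℓ ≤ (K : ℝ))
    (hq : ∀ i, q i = (1 / p i) * (1 / p (i-1) - 1 / p i))
    (hr : ∀ T, r T = (1 / (1 - p T)) *
      (1 / p K - ∑ i ∈ Finset.Icc (T+1) K, (1 - p i) * q i))
    (hT1 : 1 ≤ Tstar) (hT2 : Tstar ≤ K) (hT3 : 0 < r Tstar) :
    p Tstar > 5 / 21 ∧ 2 ≤ Tstar := by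
  have hd : ℓ / K ≤ 1 / 6 := by rw [div_le_iff₀ (by linarith)]; linarith
  have hmono : MonotoneOn p (Set.Icc 1 K) :=
    StrictMonoOn.monotoneOn fun i hi j hj hij => hpmono i j hi.1 hij hj.2
  have hpos : ∀ i, 1 ≤ i → i ≤ K → 0 < p i := fun i h1 h2 =>
    hp1.trans_le (hmono ⟨le_rfl, by omega⟩ ⟨h1, h2⟩ h1)
  have hlow : p Tstar > 5 / 21 := by
    by_contra! hT
    obtain ⟨M, hTM, hMK, hM, hM1⟩ :=
      Nat.exists_last_before_of_not (P := fun i => p i ≤ 1 / 2) hT2 (by linarith) (by linarith)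
    have hsum := one_div_sub_one_div_le_sum hTM hMK.le (hpos _ hT1 hT2)
      (hmono.mono (Set.Icc_subset_Icc_left hT1)) hpK hM
    have hterm : ∀ i ∈ Icc (Tstar + 1) K,
        (1 - p i) * q i = (1 / p i - 1) * (1 / p (i - 1) - 1 / p i) := fun i hi => by
      rw [mem_Icc] at hi
      rw [hq, one_sub_mul_one_div_mul (hpos i (by omega) hi.2).ne']
    rw [hr, sum_congr rfl hterm] at hT3
    have hS := pos_of_mul_pos_right hT3 (one_div_pos.2 (by linarith)).le
    have hK' : 1 / p K ≤ 6 / 5 := by rw [div_le_iff₀ (by linarith)]; linarith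
    have hT' : 21 / 5 ≤ 1 / p Tstar := by rw [le_div_iff₀ (hpos _ hT1 hT2)]; linarith
    have hM' : 1 / p M < 3 := by
      rw [div_lt_iff₀ (hpos M (by omega) hMK.le)]
      linarith [hdense3 M (by omega) (by omega)]
    linarith
  refine ⟨hlow, ?_⟩
  by_contra! h
  obtain rfl : Tstar = 1 := by omega
  linarith

theorem stmt_8 (K : ℕ) (ℓ : ℝ) (p q r : ℕ → ℝ) (Tstar : ℕ)
    (hK : 2 ≤ K)
    (hp1 : 0 < p 1) (hpK : p K ≤ 1)
    (hpmono : ∀ i j, 1 ≤ i → i < j → j ≤ K → p i < p j)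
    (hℓ : 0 < ℓ)
    (hdense1 : p 1 ≤ ℓ / K)
    (hdense2 : p K ≥ 1 - ℓ / K)
    (hdense3 : ∀ i, 1 ≤ i → i ≤ K - 1 → p (i+1) - p i ≤ ℓ / K)
    (hK6 : 6 * ℓ ≤ (K : ℝ))
    (hq : ∀ i, q i = (1 / p i) * (1 / p (i-1) - 1 / p i))
    (hr : ∀ T, r T = (1 / (1 - p T)) *
      (1 / p K - ∑ i ∈ Finset.Icc (T+1) K, (1 - p i) * q i))
    (hT1 : 1 ≤ Tstar) (hT2 : Tstar ≤ K) (hT3 : 0 < r Tstar)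
    (hT4 : ∀ T, 1 ≤ T → T < Tstar → r T ≤ 0) :
    p Tstar > 5 / 21 ∧ 2 ≤ Tstar :=
  stmt_8_general K ℓ p q r Tstar hp1 hpK hpmono hℓ hdense1 hdense2 hdense3 hK6 hq hr hT1 hT2 hT3
end

section
/- Let p₁ < ⋯ < p_K define an ℓ-dense symmetric stingy quantum race with K ≥ 6ℓ. Then the collision probability in the coinciding equilibrium satisfies σ(T*)/z_{T*}² ≤ 6ℓ/K, and σ(T*) ≤ 196ℓ/K. -/
/-!
Write `δ = ℓ / K ≤ 1/6`, `t = p_{T*}`, `a = p_{T*-1}`, `Q = ∑_{i > T*} q_i` and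
`B = ∑_{i > T*} p_i² q_i²`. Since `p_i q_i = 1/p_{i-1} - 1/p_i`, the sums telescope:
`(1 - t) r_{T*} = 1/t - Q`, so `z_{T*} = 1/t + t r_{T*}`, and `2Q + B = 1/t² - 1/p_K²`.
Density gives `p_i² q_i = (p_i - p_{i-1}) / p_{i-1} ≤ δ/t`, hence `B ≤ (δ/t) Q < δ/t²`, and
the telescoped identity then forces `t > 1/3`; in particular `T* ≥ 2`, while `r_{K-1} > 0`
gives `T* < K`. Minimality of `T*` yields `r_{T*} ≤ q_{T*}`, i.e. `a t² r_{T*} ≤ t - a ≤ δ`.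
Both bounds on `σ(T*) = t² r_{T*}² + B` follow from these inequalities by elementary algebra.
-/

open Finset

noncomputable section

namespace StingyRace

def q (p : ℕ → ℝ) (i : ℕ) : ℝ := (1 / p i) * (1 / p (i-1) - 1 / p i)

def r (p : ℕ → ℝ) (K T : ℕ) : ℝ :=
  (1 / (1 - p T)) * (1 / p K - ∑ i ∈ Icc (T+1) K, (1 - p i) * q p i)

variable {p : ℕ → ℝ} {K T i : ℕ}

theorem sum_Icc_sub_pred_telescope (g : ℕ → ℝ) (hTK : T ≤ K) :
    ∑ i ∈ Icc (T + 1) K, (g (i - 1) - g i) = g T - g K := by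
  induction K, hTK using Nat.le_induction with
  | base => simp
  | succ n _ ih => rw [sum_Icc_succ_top (by omega), ih, Nat.add_sub_cancel]; ring

theorem mul_q (hi : p i ≠ 0) : p i * q p i = 1 / p (i - 1) - 1 / p i := by
  unfold q; field_simp

theorem sq_mul_q (hi : p i ≠ 0) (hi' : p (i - 1) ≠ 0) :
    p i ^ 2 * q p i = (p i - p (i - 1)) / p (i - 1) := by
  unfold q; field_simp

theorem two_mul_q_add_sq_mul_sq (hi : p i ≠ 0) :
    2 * q p i + p i ^ 2 * q p i ^ 2 = (1 / p (i - 1)) ^ 2 - (1 / p i) ^ 2 := by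
  unfold q; field_simp; ring

theorem q_nonneg (hi' : 0 < p (i - 1)) (hle : p (i - 1) ≤ p i) : 0 ≤ q p i :=
  mul_nonneg (one_div_nonneg.2 (hi'.le.trans hle)) (sub_nonneg.2 (one_div_le_one_div_of_le hi' hle))

theorem sum_mul_q (hTK : T ≤ K) (hp : ∀ i ∈ Icc (T + 1) K, p i ≠ 0) :
    ∑ i ∈ Icc (T + 1) K, p i * q p i = 1 / p T - 1 / p K := by
  rw [sum_congr rfl fun i hi => mul_q (hp i hi)]
  exact sum_Icc_sub_pred_telescope (fun n => 1 / p n) hTK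

theorem two_mul_sum_q_add_sum_sq_mul_sq (hTK : T ≤ K) (hp : ∀ i ∈ Icc (T + 1) K, p i ≠ 0) :
    2 * ∑ i ∈ Icc (T + 1) K, q p i + ∑ i ∈ Icc (T + 1) K, p i ^ 2 * q p i ^ 2
      = (1 / p T) ^ 2 - (1 / p K) ^ 2 := by
  rw [mul_sum, ← sum_add_distrib, sum_congr rfl fun i hi => two_mul_q_add_sq_mul_sq (hp i hi)]
  exact sum_Icc_sub_pred_telescope (fun n => (1 / p n) ^ 2) hTK

theorem one_sub_mul_r (hT : p T ≠ 1) (hTK : T ≤ K) (hp : ∀ i ∈ Icc (T + 1) K, p i ≠ 0) :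
    (1 - p T) * r p K T = 1 / p T - ∑ i ∈ Icc (T + 1) K, q p i := by
  have hsum : ∑ i ∈ Icc (T + 1) K, (1 - p i) * q p i
      = ∑ i ∈ Icc (T + 1) K, q p i - ∑ i ∈ Icc (T + 1) K, p i * q p i := by
    rw [← sum_sub_distrib]; exact sum_congr rfl fun i _ => by ring
  have h1 : (1 : ℝ) - p T ≠ 0 := sub_ne_zero.2 hT.symm
  rw [r, hsum, sum_mul_q hTK hp, ← mul_assoc, mul_one_div_cancel h1]
  ring

theorem r_add_sum_q (hT : p T ≠ 1) (hTK : T ≤ K) (hp : ∀ i ∈ Icc (T + 1) K, p i ≠ 0) :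
    r p K T + ∑ i ∈ Icc (T + 1) K, q p i = 1 / p T + p T * r p K T := by
  linear_combination one_sub_mul_r hT hTK hp

theorem one_sub_mul_r_pred (hT : 1 ≤ T) (hTK : T ≤ K) (ha : p (T - 1) ≠ 1) (ht : p T ≠ 1) :
    (1 - p (T - 1)) * r p K (T - 1) = (1 - p T) * (r p K T - q p T) := by
  have h1 : (1 : ℝ) - p (T - 1) ≠ 0 := sub_ne_zero.2 ha.symm
  have h2 : (1 : ℝ) - p T ≠ 0 := sub_ne_zero.2 ht.symm
  have hIcc : Icc T K = insert T (Icc (T + 1) K) := by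
    rw [Icc_add_one_left_eq_Ioc, Ioc_insert_left hTK]
  rw [r, r, Nat.sub_add_cancel hT, hIcc, sum_insert (by simp)]
  field_simp
  ring

theorem r_le_q_of_r_pred_nonpos (hT : 1 ≤ T) (hTK : T ≤ K) (ha : p (T - 1) < 1) (ht : p T < 1)
    (hr : r p K (T - 1) ≤ 0) : r p K T ≤ q p T := by
  have h := one_sub_mul_r_pred (K := K) hT hTK ha.ne ht.ne
  have : (1 - p T) * (r p K T - q p T) ≤ 0 :=
    h ▸ mul_nonpos_of_nonneg_of_nonpos (by linarith) hr
  nlinarith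

structure IsDenseRace (p : ℕ → ℝ) (K : ℕ) (δ : ℝ) : Prop where
  first_pos : 0 < p 1
  last_le_one : p K ≤ 1
  lt_of_lt : ∀ i j, 1 ≤ i → i < j → j ≤ K → p i < p j
  first_le : p 1 ≤ δ
  one_sub_le_last : p K ≥ 1 - δ
  succ_sub_le : ∀ i, 1 ≤ i → i ≤ K - 1 → p (i + 1) - p i ≤ δ

namespace IsDenseRace

variable {δ : ℝ}

theorem le_of_le (hp : IsDenseRace p K δ) {j : ℕ} (hi : 1 ≤ i) (hij : i ≤ j) (hj : j ≤ K) :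
    p i ≤ p j := by
  rcases hij.eq_or_lt with rfl | hlt
  · exact le_rfl
  · exact (hp.lt_of_lt i j hi hlt hj).le

theorem pos (hp : IsDenseRace p K δ) (hi : 1 ≤ i) (hiK : i ≤ K) : 0 < p i :=
  hp.first_pos.trans_le (hp.le_of_le le_rfl hi hiK)

theorem ne_zero_of_mem_Icc (hp : IsDenseRace p K δ) : ∀ i ∈ Icc (T + 1) K, p i ≠ 0 :=
  fun i hi => (hp.pos (by grind) (mem_Icc.1 hi).2).ne'

theorem sub_pred_le (hp : IsDenseRace p K δ) (hi : 2 ≤ i) (hiK : i ≤ K) :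
    p i - p (i - 1) ≤ δ := by
  simpa [Nat.sub_add_cancel (by omega : 1 ≤ i)] using hp.succ_sub_le (i - 1) (by omega) (by omega)

theorem lt_one (hp : IsDenseRace p K δ) (hT : 1 ≤ T) (hTK : T < K) : p T < 1 :=
  (hp.lt_of_lt T K hT hTK le_rfl).trans_le hp.last_le_one

theorem r_pred_top_pos (hp : IsDenseRace p K δ) (hδ : δ ≤ 1 / 6) (hK : 2 ≤ K) :
    0 < r p K (K - 1) := by
  set a := p (K - 1)
  set b := p K
  have ha : 0 < a := hp.pos (by omega) (by omega)
  have hab : a < b := hp.lt_of_lt _ _ (by omega) (by omega) le_rfl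
  have hgap : b - a ≤ δ := hp.sub_pred_le hK le_rfl
  have hb : 1 - δ ≤ b := hp.one_sub_le_last
  have hqK : b ^ 2 * q p K ≤ 1 / 4 := by
    rw [sq_mul_q (ha.trans hab).ne' ha.ne', div_le_iff₀ ha]; linarith
  have hq0 : 0 ≤ b ^ 2 * q p K := mul_nonneg (sq_nonneg b) (q_nonneg ha hab.le)
  have hnum : 0 < b - (1 - b) * (b ^ 2 * q p K) := by nlinarith [hp.last_le_one]
  have hpos : 0 < 1 / b - (1 - b) * q p K := by
    have hb0 : b ≠ 0 := (ha.trans hab).ne'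
    rw [show 1 / b - (1 - b) * q p K = (b - (1 - b) * (b ^ 2 * q p K)) / b ^ 2 by
      field_simp]
    positivity
  rw [r, Nat.sub_add_cancel (by omega), Icc_self, sum_singleton]
  exact mul_pos (one_div_pos.2 (by linarith [hp.last_le_one])) hpos

theorem sum_sq_mul_sq_q_le_mul_sum_q (hp : IsDenseRace p K δ) (hT : 1 ≤ T) :
    ∑ i ∈ Icc (T + 1) K, p i ^ 2 * q p i ^ 2 ≤ δ / p T * ∑ i ∈ Icc (T + 1) K, q p i := by
  rw [mul_sum]
  refine sum_le_sum fun i hi => ?_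
  obtain ⟨hi1, hiK⟩ := mem_Icc.1 hi
  have ht : 0 < p T := hp.pos hT (by omega)
  have hpred : 0 < p (i - 1) := hp.pos (by omega) (by omega)
  have hlt : p (i - 1) < p i := hp.lt_of_lt _ _ (by omega) (by omega) hiK
  have hterm : p i ^ 2 * q p i ≤ δ / p T := by
    rw [sq_mul_q (hpred.trans hlt).ne' hpred.ne']
    exact div_le_div₀ (by linarith [hp.first_pos, hp.first_le]) (hp.sub_pred_le (by omega) hiK) ht
      (hp.le_of_le hT (by omega) (by omega))
  calc p i ^ 2 * q p i ^ 2 = (p i ^ 2 * q p i) * q p i := by ring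
    _ ≤ δ / p T * q p i := mul_le_mul_of_nonneg_right hterm (q_nonneg hpred hlt.le)

theorem sum_q_lt (hp : IsDenseRace p K δ) (hT : 1 ≤ T) (hTK : T < K) (hr : 0 < r p K T) :
    ∑ i ∈ Icc (T + 1) K, q p i < 1 / p T := by
  have ht := hp.lt_one hT hTK
  have h := one_sub_mul_r ht.ne hTK.le hp.ne_zero_of_mem_Icc
  nlinarith

theorem sum_sq_mul_sq_q_le (hp : IsDenseRace p K δ) (hT : 1 ≤ T) (hTK : T < K)
    (hr : 0 < r p K T) : ∑ i ∈ Icc (T + 1) K, p i ^ 2 * q p i ^ 2 ≤ δ / p T ^ 2 := by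
  have ht : 0 < p T := hp.pos hT hTK.le
  have hδ : 0 ≤ δ / p T := div_nonneg (by linarith [hp.first_pos, hp.first_le]) ht.le
  calc _ ≤ δ / p T * ∑ i ∈ Icc (T + 1) K, q p i := hp.sum_sq_mul_sq_q_le_mul_sum_q hT
    _ ≤ δ / p T * (1 / p T) := mul_le_mul_of_nonneg_left (hp.sum_q_lt hT hTK hr).le hδ
    _ = δ / p T ^ 2 := by ring

theorem one_third_lt (hp : IsDenseRace p K δ) (hδ : δ ≤ 1 / 6) (hT : 1 ≤ T) (hTK : T < K)
    (hr : 0 < r p K T) : 1 / 3 < p T := by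
  have ht : 0 < p T := hp.pos hT hTK.le
  set u := 1 / p T with hu
  set Q := ∑ i ∈ Icc (T + 1) K, q p i
  have hQ : 2 * Q + _ = u ^ 2 - (1 / p K) ^ 2 :=
    two_mul_sum_q_add_sum_sq_mul_sq hTK.le hp.ne_zero_of_mem_Icc
  have hB := hp.sum_sq_mul_sq_q_le_mul_sum_q hT
  have hQu : Q < u := hp.sum_q_lt hT hTK hr
  have hQ0 : 0 ≤ Q := sum_nonneg fun i hi => by
    obtain ⟨hi1, hiK⟩ := mem_Icc.1 hi
    exact q_nonneg (hp.pos (by omega) (by omega)) (hp.le_of_le (by omega) (by omega) hiK)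
  have hb : (1 / p K) ^ 2 ≤ 36 / 25 := by
    have : 5 / 6 ≤ p K := by linarith [hp.one_sub_le_last]
    rw [div_pow, one_pow, div_le_div_iff₀ (by positivity) (by norm_num)]
    nlinarith
  -- With `u = 1/t ≥ 3`: `u² - 36/25 ≤ 2Q + B ≤ (2 + u/6) Q < (2 + u/6) u`, false for `u ≥ 3`.
  by_contra! h
  have hu3 : 3 ≤ u := by rw [hu, le_div_iff₀ ht]; linarith
  have hδu : δ / p T = δ * u := by rw [hu]; ring
  rw [hδu] at hB
  nlinarith [mul_le_mul_of_nonneg_right hδ (mul_nonneg (by linarith : (0:ℝ) ≤ u) hQ0),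
    mul_le_mul_of_nonneg_left hQu.le (by linarith : (0:ℝ) ≤ 2 + u / 6)]

theorem pred_mul_sq_mul_r_le (hp : IsDenseRace p K δ) (hT : 2 ≤ T) (hTK : T < K)
    (hr : r p K (T - 1) ≤ 0) : p (T - 1) * p T ^ 2 * r p K T ≤ δ := by
  have ha : 0 < p (T - 1) := hp.pos (by omega) (by omega)
  have hrq := r_le_q_of_r_pred_nonpos (by omega) hTK.le (hp.lt_one (by omega) (by omega))
    (hp.lt_one (by omega) hTK) hr
  calc _ ≤ p (T - 1) * (p T ^ 2 * q p T) := by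
        rw [mul_assoc]
        exact mul_le_mul_of_nonneg_left (mul_le_mul_of_nonneg_left hrq (sq_nonneg _)) ha.le
    _ = p T - p (T - 1) := by rw [sq_mul_q (hp.pos (by omega) hTK.le).ne' ha.ne']; field_simp
    _ ≤ δ := hp.sub_pred_le hT hTK.le

end IsDenseRace

section CollisionBounds
variable {δ t a ρ B : ℝ}

theorem delta_pos_of_bounds (hδ : δ ≤ 1 / 6) (ht : 1 / 3 < t) (ha : t - δ ≤ a) (hρ : 0 < ρ)
    (haρ : a * t ^ 2 * ρ ≤ δ) : 0 < δ := by
  have : 0 < a := by linarith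
  have : 0 < a * t ^ 2 * ρ := by positivity
  linarith

theorem collision_le_of_bounds (hδ : δ ≤ 1 / 6) (ht : 1 / 3 < t) (ha : t - δ ≤ a)
    (hρ : 0 < ρ) (haρ : a * t ^ 2 * ρ ≤ δ) (hB : B ≤ δ / t ^ 2) :
    t ^ 2 * ρ ^ 2 + B ≤ 196 * δ := by
  have hδ0 := delta_pos_of_bounds hδ ht ha hρ haρ
  have htρ : t * ρ ≤ 18 * δ := by
    have : 1 / 18 ≤ a * t := by nlinarith
    nlinarith [mul_pos (by linarith : (0:ℝ) < t) hρ]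
  have hB9 : B ≤ 9 * δ := by
    refine hB.trans ?_
    have : 1 / 9 < t ^ 2 := by nlinarith
    rw [div_le_iff₀ (by positivity)]
    nlinarith
  nlinarith [mul_pos (by linarith : (0:ℝ) < t) hρ]

theorem collision_div_sq_le_of_bounds (hδ : δ ≤ 1 / 6) (ht : 1 / 3 < t) (ha : t - δ ≤ a)
    (hρ : 0 < ρ) (haρ : a * t ^ 2 * ρ ≤ δ) (hB : B ≤ δ / t ^ 2) :
    (t ^ 2 * ρ ^ 2 + B) / (1 / t + t * ρ) ^ 2 ≤ 6 * δ := by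
  have hδ0 := delta_pos_of_bounds hδ ht ha hρ haρ
  have ht0 : 0 < t := by linarith
  set z := 1 / t + t * ρ with hz
  have hz1 : 1 / t ≤ z := by have := mul_pos ht0 hρ; linarith
  have htρ : t * ρ ≤ δ / t * z := by
    have h : t ^ 3 * ρ ≤ δ + δ * (t ^ 2 * ρ) := by nlinarith [mul_pos (pow_pos ht0 2) hρ]
    rw [hz, show δ / t * (1 / t + t * ρ) = δ / t ^ 2 + δ * ρ by field_simp,
      ← sub_le_iff_le_add, le_div_iff₀ (by positivity)]
    linear_combination h
  have hδt : δ / t ≤ 3 * δ := by rw [div_le_iff₀ ht0]; nlinarith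
  have hB' : B ≤ δ * z ^ 2 := by
    refine hB.trans ?_
    rw [show δ / t ^ 2 = δ * (1 / t) ^ 2 by ring]
    exact mul_le_mul_of_nonneg_left (pow_le_pow_left₀ (by positivity) hz1 2) hδ0.le
  have hsq : t ^ 2 * ρ ^ 2 ≤ (3 * δ) ^ 2 * z ^ 2 := by
    rw [show t ^ 2 * ρ ^ 2 = (t * ρ) ^ 2 by ring, ← mul_pow]
    exact pow_le_pow_left₀ (by positivity)
      (htρ.trans (mul_le_mul_of_nonneg_right hδt (by positivity))) 2
  have hδδ : (3 * δ) ^ 2 * z ^ 2 ≤ 3 / 2 * δ * z ^ 2 :=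
    mul_le_mul_of_nonneg_right (by nlinarith) (sq_nonneg z)
  rw [div_le_iff₀ (by positivity)]
  nlinarith [sq_nonneg z]

end CollisionBounds

end StingyRace

end

theorem stmt_10_general (K : ℕ) (ℓ : ℝ) (p q r z σ : ℕ → ℝ) (Tstar : ℕ)
    (hK : 2 ≤ K)
    (hp1 : 0 < p 1) (hpK : p K ≤ 1)
    (hpmono : ∀ i j, 1 ≤ i → i < j → j ≤ K → p i < p j)
    (hdense1 : p 1 ≤ ℓ / K)
    (hdense2 : p K ≥ 1 - ℓ / K)
    (hdense3 : ∀ i, 1 ≤ i → i ≤ K - 1 → p (i+1) - p i ≤ ℓ / K)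
    (hK6 : 6 * ℓ ≤ (K : ℝ))
    (hq : ∀ i, q i = (1 / p i) * (1 / p (i-1) - 1 / p i))
    (hr : ∀ T, r T = (1 / (1 - p T)) *
      (1 / p K - ∑ i ∈ Finset.Icc (T+1) K, (1 - p i) * q i))
    (hz : ∀ T, z T = r T + ∑ i ∈ Finset.Icc (T+1) K, q i)
    (hσ : ∀ T, σ T = (p T)^2 * (r T)^2 + ∑ i ∈ Finset.Icc (T+1) K, (p i)^2 * (q i)^2)
    (hT1 : 1 ≤ Tstar) (hT2 : Tstar ≤ K) (hT3 : 0 < r Tstar)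
    (hT4 : ∀ T, 1 ≤ T → T < Tstar → r T ≤ 0) :
    σ Tstar / (z Tstar)^2 ≤ 6 * ℓ / K ∧ σ Tstar ≤ 196 * ℓ / K := by
  obtain rfl : q = StingyRace.q p := funext hq
  obtain rfl : r = StingyRace.r p K := funext hr
  have hp : StingyRace.IsDenseRace p K (ℓ / K) :=
    ⟨hp1, hpK, hpmono, hdense1, hdense2, hdense3⟩
  have hδ : ℓ / K ≤ 1 / 6 := by
    rw [div_le_iff₀ (Nat.cast_pos.2 (by omega))]; linarith
  have hTK : Tstar < K := hT2.lt_of_ne fun h =>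
    (hT4 (K - 1) (by omega) (by omega)).not_gt (h ▸ hp.r_pred_top_pos hδ hK)
  have ht := hp.one_third_lt hδ hT1 hTK hT3
  have hT2' : 2 ≤ Tstar := by
    by_contra! h
    obtain rfl : Tstar = 1 := by omega
    linarith
  have ha : p Tstar - ℓ / K ≤ p (Tstar - 1) := by linarith [hp.sub_pred_le hT2' hT2]
  have haρ := hp.pred_mul_sq_mul_r_le hT2' hTK (hT4 (Tstar - 1) (by omega) (by omega))
  have hB := hp.sum_sq_mul_sq_q_le hT1 hTK hT3
  rw [hz, hσ, StingyRace.r_add_sum_q (hp.lt_one hT1 hTK).ne hT2 hp.ne_zero_of_mem_Icc,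
    mul_div_assoc, mul_div_assoc]
  exact ⟨StingyRace.collision_div_sq_le_of_bounds hδ ht ha hT3 haρ hB,
    StingyRace.collision_le_of_bounds hδ ht ha hT3 haρ hB⟩

theorem stmt_10 (K : ℕ) (ℓ : ℝ) (p q r z σ : ℕ → ℝ) (Tstar : ℕ)
    (hK : 2 ≤ K)
    (hp1 : 0 < p 1) (hpK : p K ≤ 1)
    (hpmono : ∀ i j, 1 ≤ i → i < j → j ≤ K → p i < p j)
    (hℓ : 0 < ℓ)
    (hdense1 : p 1 ≤ ℓ / K)
    (hdense2 : p K ≥ 1 - ℓ / K)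
    (hdense3 : ∀ i, 1 ≤ i → i ≤ K - 1 → p (i+1) - p i ≤ ℓ / K)
    (hK6 : 6 * ℓ ≤ (K : ℝ))
    (hq : ∀ i, q i = (1 / p i) * (1 / p (i-1) - 1 / p i))
    (hr : ∀ T, r T = (1 / (1 - p T)) *
      (1 / p K - ∑ i ∈ Finset.Icc (T+1) K, (1 - p i) * q i))
    (hz : ∀ T, z T = r T + ∑ i ∈ Finset.Icc (T+1) K, q i)
    (hσ : ∀ T, σ T = (p T)^2 * (r T)^2 + ∑ i ∈ Finset.Icc (T+1) K, (p i)^2 * (q i)^2)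
    (hT1 : 1 ≤ Tstar) (hT2 : Tstar ≤ K) (hT3 : 0 < r Tstar)
    (hT4 : ∀ T, 1 ≤ T → T < Tstar → r T ≤ 0) :
    σ Tstar / (z Tstar)^2 ≤ 6 * ℓ / K ∧ σ Tstar ≤ 196 * ℓ / K :=
  stmt_10_general K ℓ p q r z σ Tstar hK hp1 hpK hpmono hdense1 hdense2 hdense3 hK6 hq hr hz hσ hT1
    hT2 hT3 hT4
end

section
/- Let 0 < p₁ < ⋯ < p_K ≤ 1 and let A be the K×K payoff matrix of the symmetric quantum race: A(i,j) = pᵢ if i<j, pᵢ(1−pᵢ) + pᵢ²/2 if i=j, pᵢ(1−pⱼ) if i>j. Then A + Aᵀ = p·1ᵀ + 1·pᵀ − p·pᵀ, where p is the column vector (p₁,…,p_K) and 1 is the all-ones vector. In particular, xᵀ(A+Aᵀ)x = 2pᵀx − (pᵀx)² for any vector x with 1ᵀx = 1. -/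
open Matrix

theorem stmt_14 (K : ℕ) (p : Fin K → ℝ)
    (hp0 : ∀ i, 0 < p i) (hp1 : ∀ i, p i ≤ 1) (hpmono : StrictMono p)
    (A : Matrix (Fin K) (Fin K) ℝ)
    (hA : ∀ i j, A i j =
      if i < j then p i
      else if i = j then p i * (1 - p i) + (p i)^2 / 2
      else p i * (1 - p j)) :
    A + Aᵀ = Matrix.vecMulVec p (fun _ => (1:ℝ)) + Matrix.vecMulVec (fun _ => (1:ℝ)) p
              - Matrix.vecMulVec p p ∧
    ∀ x : Fin K → ℝ, (∑ i, x i) = 1 →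
      x ⬝ᵥ (A + Aᵀ).mulVec x = 2 * (p ⬝ᵥ x) - (p ⬝ᵥ x)^2 := by
  have hmain : A + Aᵀ = Matrix.vecMulVec p (fun _ => (1:ℝ)) +
      Matrix.vecMulVec (fun _ => (1:ℝ)) p - Matrix.vecMulVec p p := by
    ext i j
    simp only [Matrix.add_apply, Matrix.sub_apply, Matrix.transpose_apply,
      Matrix.vecMulVec_apply, hA]
    rcases lt_trichotomy i j with h | h | h
    · rw [if_pos h, if_neg (not_lt_of_gt h), if_neg h.ne']
      ring
    · subst h
      rw [if_neg (lt_irrefl i), if_pos rfl]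
      ring
    · rw [if_neg (not_lt_of_gt h), if_neg h.ne', if_pos h]
      ring
  refine ⟨hmain, fun x hx => ?_⟩
  have key : ∀ (a b : Fin K → ℝ),
      x ⬝ᵥ (Matrix.vecMulVec a b).mulVec x = (a ⬝ᵥ x) * (b ⬝ᵥ x) := by
    intro a b
    simp only [dotProduct, Matrix.mulVec, Matrix.vecMulVec_apply, dotProduct,
      Finset.sum_mul, Finset.mul_sum]
    rw [Finset.sum_comm]
    apply Finset.sum_congr rfl
    intro j _
    apply Finset.sum_congr rfl
    intro i _
    ring
  have h1 : (fun _ : Fin K => (1:ℝ)) ⬝ᵥ x = 1 := by simpa [dotProduct] using hx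
  rw [hmain, Matrix.sub_mulVec, Matrix.add_mulVec, dotProduct_sub, dotProduct_add,
    key, key, key, h1]
  ring
end

section
/- Let p₁ < ⋯ < p_K be an ℓ-dense sequence with K ≥ 6ℓ. Then any symmetric Nash equilibrium (x,x) of the two-player symmetric quantum race defined by p₁,…,p_K has payoff xᵀAx ≤ √2 − 1 + 5√(ℓ/K). -/
open Finset

/-- Payoff entry of the symmetric quantum race (with tie-splitting). -/
noncomputable def raceEntry (p : ℕ → ℝ) (i j : ℕ) : ℝ :=
  if i < j then p i
  else if i = j then p i * (1 - p i) + (p i)^2 / 2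
  else p i * (1 - p j)

/-- `e_i^T A x` : payoff of pure strategy `i` against mixed strategy `x`. -/
noncomputable def racePayoff (K : ℕ) (p : ℕ → ℝ) (x : ℕ → ℝ) (i : ℕ) : ℝ :=
  ∑ j ∈ Finset.Icc 1 K, raceEntry p i j * x j

set_option maxHeartbeats 1000000 in
theorem stmt_15 (K : ℕ) (ℓ : ℝ) (p : ℕ → ℝ) (x : ℕ → ℝ)
    (hK : 2 ≤ K)
    (hp1 : 0 < p 1) (hpK : p K ≤ 1)
    (hpmono : ∀ i j, 1 ≤ i → i < j → j ≤ K → p i < p j)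
    (hℓ : 0 < ℓ)
    (hdense1 : p 1 ≤ ℓ / K)
    (hdense2 : p K ≥ 1 - ℓ / K)
    (hdense3 : ∀ i, 1 ≤ i → i ≤ K - 1 → p (i+1) - p i ≤ ℓ / K)
    (hK6 : 6 * ℓ ≤ (K : ℝ))
    (hx0 : ∀ i, 0 ≤ x i) (hx1 : ∑ i ∈ Finset.Icc 1 K, x i = 1)
    (hxsupp : ∀ i, x i ≠ 0 → i ∈ Finset.Icc 1 K)
    -- (x,x) is a symmetric Nash equilibrium :
    (hNE : ∀ i ∈ Finset.Icc 1 K, 0 < x i →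
      ∀ i' ∈ Finset.Icc 1 K, racePayoff K p x i' ≤ racePayoff K p x i) :
    ∑ i ∈ Finset.Icc 1 K, x i * racePayoff K p x i
      ≤ Real.sqrt 2 - 1 + 5 * Real.sqrt (ℓ / K) := by
  classical
  have hK0 : 0 < K := by omega
  have hKR : (0:ℝ) < (K:ℝ) := by exact_mod_cast hK0
  obtain ⟨e, he⟩ : ∃ E : ℝ, E = ℓ / K := ⟨_, rfl⟩
  simp only [← he] at hdense1 hdense2 hdense3 ⊢
  set s : Finset ℕ := Finset.Icc 1 K with hsdef
  have hmem : ∀ i, i ∈ s ↔ 1 ≤ i ∧ i ≤ K := fun i => by rw [hsdef]; exact Finset.mem_Icc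
  have he0 : 0 < e := by rw [he]; exact div_pos hℓ hKR
  have he6 : e ≤ 1/6 := by rw [he, div_le_iff₀ hKR]; linarith
  have hxz : ∀ j, j ∉ s → x j = 0 := by
    intro j hj; by_contra hne; exact hj (hxsupp j hne)
  have hple : ∀ i ∈ s, ∀ j ∈ s, i ≤ j → p i ≤ p j := by
    intro i hi j hj hij
    rcases eq_or_lt_of_le hij with rfl | hlt
    · exact le_refl _
    · exact (hpmono i j ((hmem i).1 hi).1 hlt ((hmem j).1 hj).2).le
  have h1s : (1:ℕ) ∈ s := (hmem 1).2 ⟨le_refl 1, by omega⟩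
  have hKs : K ∈ s := (hmem K).2 ⟨by omega, le_refl K⟩
  have hppos : ∀ i ∈ s, 0 < p i := by
    intro i hi
    exact lt_of_lt_of_le hp1 (hple 1 h1s i hi ((hmem i).1 hi).1)
  have hp1' : ∀ i ∈ s, p i ≤ 1 := by
    intro i hi
    exact le_trans (hple i hi K hKs ((hmem i).1 hi).2) hpK
  have hxle1 : ∀ i ∈ s, x i ≤ 1 := by
    intro i hi
    rw [← hx1]
    exact Finset.single_le_sum (fun j _ => hx0 j) hi
  -- abbreviations
  obtain ⟨a, ha⟩ : ∃ a : ℕ → ℝ, ∀ j, a j = p j * x j := ⟨_, fun _ => rfl⟩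
  obtain ⟨F, hF⟩ : ∃ F : ℕ → ℝ, ∀ i, F i = ∑ u ∈ s.filter (fun u => u < i), a u :=
    ⟨_, fun _ => rfl⟩
  have ha0 : ∀ j ∈ s, 0 ≤ a j := fun j hj => by
    rw [ha]; exact mul_nonneg (hppos j hj).le (hx0 j)
  have ha1 : ∀ j ∈ s, a j ≤ 1 := fun j hj => by
    rw [ha]
    calc p j * x j ≤ 1 * 1 := by
          apply mul_le_mul (hp1' j hj) (hxle1 j hj) (hx0 j) zero_le_one
      _ = 1 := by ring
  -- payoff formula
  have hpay : ∀ i ∈ s, racePayoff K p x i = p i * (1 - F i - a i / 2) := by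
    intro i hi
    have hterm : ∀ j ∈ s, raceEntry p i j * x j
        = p i * x j - p i * ((if j < i then a j else 0) + (if j = i then a i / 2 else 0)) := by
      intro j hj
      rcases lt_trichotomy i j with hij | rfl | hji
      · rw [raceEntry, if_pos hij, if_neg (by omega), if_neg (by omega)]
        ring
      · rw [raceEntry, if_neg (by omega), if_pos rfl, if_neg (by omega), if_pos rfl, ha i]
        ring
      · rw [raceEntry, if_neg (by omega), if_neg (by omega), if_pos hji, if_neg (by omega), ha j]
        ring
    have hsum1 : ∑ j ∈ s, (if j < i then a j else 0) = F i := by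
      rw [hF, Finset.sum_filter]
    have hsum2 : ∑ j ∈ s, (if j = i then a i / 2 else 0) = a i / 2 := by
      rw [Finset.sum_ite_eq' s i (fun _ => a i / 2), if_pos hi]
    calc racePayoff K p x i
        = ∑ j ∈ s, (p i * x j - p i * ((if j < i then a j else 0) + (if j = i then a i / 2 else 0))) := by
          rw [racePayoff, ← hsdef]; exact Finset.sum_congr rfl hterm
      _ = p i * (∑ j ∈ s, x j)
          - p i * ((∑ j ∈ s, (if j < i then a j else 0)) + ∑ j ∈ s, (if j = i then a i / 2 else 0)) := by
          rw [Finset.sum_sub_distrib, ← Finset.mul_sum, ← Finset.mul_sum, Finset.sum_add_distrib]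
      _ = p i * (1 - F i - a i / 2) := by rw [hx1, hsum1, hsum2]; ring
  -- the value
  obtain ⟨v, hvdef⟩ : ∃ V : ℝ, V = ∑ i ∈ s, x i * racePayoff K p x i := ⟨_, rfl⟩
  rw [← hvdef]
  have hTex : ∃ i ∈ s, 0 < x i := by
    have : ∃ i ∈ s, x i ≠ 0 := by
      apply Finset.exists_ne_zero_of_sum_ne_zero
      rw [hx1]; norm_num
    obtain ⟨i, hi, hne⟩ := this
    exact ⟨i, hi, lt_of_le_of_ne (hx0 i) (Ne.symm hne)⟩
  have hveq : ∀ i ∈ s, 0 < x i → racePayoff K p x i = v := by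
    intro i hi hxi
    apply le_antisymm
    · calc racePayoff K p x i = ∑ j ∈ s, x j * racePayoff K p x i := by
            rw [← Finset.sum_mul, hx1, one_mul]
        _ ≤ ∑ j ∈ s, x j * racePayoff K p x j := by
            apply Finset.sum_le_sum
            intro j hj
            rcases eq_or_lt_of_le (hx0 j) with hxj | hxj
            · rw [← hxj]; ring_nf; exact le_refl _
            · exact mul_le_mul_of_nonneg_left (hNE j hj hxj i hi) (hx0 j)
        _ = v := hvdef.symm
    · calc v = ∑ j ∈ s, x j * racePayoff K p x j := hvdef
        _ ≤ ∑ j ∈ s, x j * racePayoff K p x i := by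
            apply Finset.sum_le_sum
            intro j hj
            exact mul_le_mul_of_nonneg_left (hNE i hi hxi j hj) (hx0 j)
        _ = racePayoff K p x i := by rw [← Finset.sum_mul, hx1, one_mul]
  have hvle : ∀ i ∈ s, racePayoff K p x i ≤ v := by
    intro i hi
    obtain ⟨j, hj, hxj⟩ := hTex
    exact le_of_le_of_eq (hNE j hj hxj i hi) (hveq j hj hxj)
  have hcon : ∀ i ∈ s, p i * (1 - F i - a i / 2) ≤ v := by
    intro i hi; rw [← hpay i hi]; exact hvle i hi
  have heqv : ∀ i ∈ s, 0 < x i → p i * (1 - F i - a i / 2) = v := by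
    intro i hi hxi; rw [← hpay i hi]; exact hveq i hi hxi
  -- support structure
  obtain ⟨T, hTdef⟩ : ∃ t : Finset ℕ, t = s.filter (fun i => 0 < x i) := ⟨_, rfl⟩
  have hTmem : ∀ u, u ∈ T ↔ u ∈ s ∧ 0 < x u := fun u => by
    rw [hTdef, Finset.mem_filter]
  have hTne : T.Nonempty := by
    obtain ⟨i, hi, hxi⟩ := hTex
    exact ⟨i, (hTmem i).2 ⟨hi, hxi⟩⟩
  obtain ⟨i₀, hi₀def⟩ : ∃ n : ℕ, n = T.min' hTne := ⟨_, rfl⟩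
  obtain ⟨M, hMdef⟩ : ∃ n : ℕ, n = T.max' hTne := ⟨_, rfl⟩
  have hi₀T : i₀ ∈ T := by rw [hi₀def]; exact T.min'_mem hTne
  have hMT : M ∈ T := by rw [hMdef]; exact T.max'_mem hTne
  have hi₀s : i₀ ∈ s := ((hTmem i₀).1 hi₀T).1
  have hMs : M ∈ s := ((hTmem M).1 hMT).1
  have hxi₀ : 0 < x i₀ := ((hTmem i₀).1 hi₀T).2
  have hminle : ∀ u ∈ T, i₀ ≤ u := by
    intro u hu; rw [hi₀def]; exact T.min'_le u hu
  have hlemax : ∀ u ∈ T, u ≤ M := by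
    intro u hu; rw [hMdef]; exact T.le_max' u hu
  have hi₀1 : 1 ≤ i₀ := ((hmem i₀).1 hi₀s).1
  have hi₀K : i₀ ≤ K := ((hmem i₀).1 hi₀s).2
  have hxz' : ∀ u ∈ s, u < i₀ → x u = 0 := by
    intro u hu hlt
    rcases eq_or_lt_of_le (hx0 u) with h | h
    · exact h.symm
    · exact absurd (hminle u ((hTmem u).2 ⟨hu, h⟩)) (by omega)
  have hFz : ∀ i, i ≤ i₀ → F i = 0 := by
    intro i hi
    rw [hF]
    apply Finset.sum_eq_zero
    intro u hu
    rw [Finset.mem_filter] at hu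
    rw [ha, hxz' u hu.1 (by omega), mul_zero]
  have hFsplit : ∀ j i, j ∈ s → j < i → (∀ u ∈ s, j < u → u < i → x u = 0) → F i = F j + a j := by
    intro j i hjs hji hgap0
    have h1 : F i = ∑ u ∈ (s.filter (fun u => u < i)).filter (fun u => u < j), a u
        + ∑ u ∈ (s.filter (fun u => u < i)).filter (fun u => ¬ u < j), a u := by
      rw [hF]
      exact (Finset.sum_filter_add_sum_filter_not _ _ _).symm
    have h2 : (s.filter (fun u => u < i)).filter (fun u => u < j) = s.filter (fun u => u < j) := by
      ext u
      simp only [Finset.mem_filter]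
      constructor
      · rintro ⟨⟨h1', _⟩, h3⟩; exact ⟨h1', h3⟩
      · rintro ⟨h1', h3⟩; exact ⟨⟨h1', by omega⟩, h3⟩
    have h3 : ∑ u ∈ (s.filter (fun u => u < i)).filter (fun u => ¬ u < j), a u = a j := by
      apply Finset.sum_eq_single_of_mem
      · simp only [Finset.mem_filter]; exact ⟨⟨hjs, hji⟩, by omega⟩
      · intro u hu hne
        simp only [Finset.mem_filter] at hu
        rw [ha, hgap0 u hu.1.1 (by omega) hu.1.2, mul_zero]
    rw [h1, h2, h3, hF]
  -- basic value facts
  have hv_i₀ : p i₀ * (1 - a i₀ / 2) = v := by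
    have := heqv i₀ hi₀s hxi₀
    rw [hFz i₀ (le_refl _)] at this
    linarith [this]
  have hpi₀pos : 0 < p i₀ := hppos i₀ hi₀s
  have hvpos : 0 < v := by nlinarith [ha1 i₀ hi₀s, ha0 i₀ hi₀s, hv_i₀, hpi₀pos]
  have hvlep : v ≤ p i₀ := by nlinarith [ha0 i₀ hi₀s, hv_i₀, hpi₀pos]
  have hvlepj : ∀ j ∈ s, i₀ ≤ j → v ≤ p j := fun j hj hij =>
    le_trans hvlep (hple i₀ hi₀s j hj hij)
  -- p i₀ ≤ v + e
  have hpi₀ub : p i₀ ≤ v + e := by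
    by_cases h1 : i₀ = 1
    · rw [h1]; linarith [hdense1, hvpos]
    · have hi₀2 : 2 ≤ i₀ := by omega
      have hi's : i₀ - 1 ∈ s := (hmem _).2 ⟨by omega, by omega⟩
      have hFi' : F (i₀ - 1) = 0 := hFz _ (by omega)
      have hai' : a (i₀ - 1) = 0 := by
        rw [ha, hxz' _ hi's (by omega), mul_zero]
      have hcon' := hcon _ hi's
      rw [hFi', hai'] at hcon'
      have hpi' : p (i₀ - 1) ≤ v := by linarith [hcon']
      have hd := hdense3 (i₀ - 1) (by omega) (by omega)
      rw [show i₀ - 1 + 1 = i₀ by omega] at hd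
      linarith
  -- atom bound
  have hatom : ∀ j ∈ T, a j ≤ 2 * e / v := by
    intro j hjT
    obtain ⟨hjs, hxj⟩ := (hTmem j).1 hjT
    rw [le_div_iff₀ hvpos]
    by_cases hji : j = i₀
    · rw [hji]
      nlinarith [hv_i₀, ha0 i₀ hi₀s, hvlep, hpi₀ub, hpi₀pos]
    · have hij : i₀ < j := lt_of_le_of_ne (hminle j hjT) (Ne.symm hji)
      have hjK : j ≤ K := ((hmem j).1 hjs).2
      have his : j - 1 ∈ s := (hmem (j-1)).2 ⟨by omega, by omega⟩
      have hFj : F j = F (j-1) + a (j-1) := by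
        apply hFsplit (j-1) j his (by omega)
        intro u hu h1 h2; omega
      have heqj := heqv j hjs hxj
      rw [hFj] at heqj
      have hconi := hcon (j-1) his
      have hpi : 0 < p (j-1) := hppos (j-1) his
      have hpj : 0 < p j := hppos j hjs
      have hvi : v ≤ p (j-1) := hvlepj (j-1) his (by omega)
      have hvj : v ≤ p j := hvlepj j hjs (by omega)
      have hpij : p (j-1) ≤ p j := hple (j-1) his j hjs (by omega)
      have hd : p j - p (j-1) ≤ e := by
        have := hdense3 (j-1) (by omega) (by omega)
        rw [show j - 1 + 1 = j by omega] at this; exact this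
      have h1 : 1 - (F (j-1) + a (j-1)) - a j / 2 = v / p j := by
        rw [eq_div_iff hpj.ne']; linarith [heqj]
      have h2 : 1 - F (j-1) - a (j-1) / 2 ≤ v / p (j-1) := by
        rw [le_div_iff₀ hpi]; nlinarith [hconi]
      have h3 : v / p (j-1) - v / p j ≤ e / v := by
        rw [div_sub_div _ _ hpi.ne' hpj.ne', div_le_div_iff₀ (mul_pos hpi hpj) hvpos]
        have hA : v * v * (p j - p (j-1)) ≤ v * v * e :=
          mul_le_mul_of_nonneg_left hd (by positivity)
        have hB : v * v ≤ p (j-1) * p j := mul_le_mul hvi hvj hvpos.le hpi.le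
        have hC := mul_le_mul_of_nonneg_right hB he0.le
        linarith [hA, hC]
      have h4 : a j ≤ 2 * (e / v) := by linarith [ha0 (j-1) his, h1, h2, h3]
      calc a j * v ≤ (2 * (e / v)) * v := mul_le_mul_of_nonneg_right h4 hvpos.le
        _ = 2 * e := by rw [mul_assoc, div_mul_cancel₀ _ hvpos.ne']
  -- consecutive support points
  have hconsec : ∀ j j', j ∈ T → j' ∈ T → j < j' → (∀ u ∈ s, j < u → u < j' → x u = 0) →
      a j + a j' = 2 * (v / p j - v / p j') ∧ v / p j - v / p j' ≤ 2 * e / v := by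
    intro j j' hjT hj'T hjj' hbet
    obtain ⟨hjs, hxj⟩ := (hTmem j).1 hjT
    obtain ⟨hj's, hxj'⟩ := (hTmem j').1 hj'T
    have hpj : 0 < p j := hppos j hjs
    have hpj' : 0 < p j' := hppos j' hj's
    have hi₀j : i₀ ≤ j := hminle j hjT
    have hj'K : j' ≤ K := ((hmem j').1 hj's).2
    have hFj' : F j' = F j + a j := hFsplit j j' hjs hjj' hbet
    have h1 : 1 - F j - a j / 2 = v / p j := by
      rw [eq_div_iff hpj.ne']; linarith [heqv j hjs hxj]
    have h2 : 1 - (F j + a j) - a j' / 2 = v / p j' := by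
      have hh := heqv j' hj's hxj'
      rw [hFj'] at hh
      rw [eq_div_iff hpj'.ne']; linarith [hh]
    constructor
    · linarith [h1, h2]
    · have h2e : 2 * e / v = 2 * (e / v) := by ring
      rw [h2e]
      by_cases hstep : j' = j + 1
      · have hd : p j' - p j ≤ e := by
          have := hdense3 j (by omega) (by omega)
          rw [show j + 1 = j' by omega] at this; exact this
        have hvj : v ≤ p j := hvlepj j hjs hi₀j
        have hvj' : v ≤ p j' := hvlepj j' hj's (by omega)
        have h3 : v / p j - v / p j' ≤ e / v := by
          rw [div_sub_div _ _ hpj.ne' hpj'.ne', div_le_div_iff₀ (mul_pos hpj hpj') hvpos]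
          have hA : v * v * (p j' - p j) ≤ v * v * e :=
            mul_le_mul_of_nonneg_left hd (by positivity)
          have hB : v * v ≤ p j * p j' := mul_le_mul hvj hvj' hvpos.le hpj.le
          have hC := mul_le_mul_of_nonneg_right hB he0.le
          linarith [hA, hC]
        have h4 : 0 < e / v := div_pos he0 hvpos
        linarith [h3, h4]
      · have hj1 : j + 1 < j' := by omega
        have his : j' - 1 ∈ s := (hmem _).2 ⟨by omega, by omega⟩
        have hxi0 : x (j' - 1) = 0 := hbet _ his (by omega) (by omega)
        have hai : a (j' - 1) = 0 := by rw [ha, hxi0, mul_zero]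
        have hFi : F (j' - 1) = F j + a j := by
          apply hFsplit j (j' - 1) hjs (by omega)
          intro u hu hu1 hu2; exact hbet u hu hu1 (by omega)
        have hconi := hcon _ his
        rw [hFi, hai] at hconi
        have hpi : 0 < p (j' - 1) := hppos _ his
        have hvi : v ≤ p (j' - 1) := hvlepj _ his (by omega)
        have hvj' : v ≤ p j' := hvlepj j' hj's (by omega)
        have hpij : p (j' - 1) ≤ p j' := hple _ his j' hj's (by omega)
        have h3 : 1 - (F j + a j) ≤ v / p (j' - 1) := by
          rw [le_div_iff₀ hpi]; nlinarith [hconi]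
        have h4 : v / p j - v / p (j' - 1) ≤ a j / 2 := by linarith [h1, h3]
        have h5 : a j ≤ 2 * (e / v) := by
          have hh := hatom j hjT
          rw [mul_div_assoc] at hh
          exact hh
        have hd : p j' - p (j' - 1) ≤ e := by
          have := hdense3 (j' - 1) (by omega) (by omega)
          rw [show j' - 1 + 1 = j' by omega] at this; exact this
        have h6 : v / p (j' - 1) - v / p j' ≤ e / v := by
          rw [div_sub_div _ _ hpi.ne' hpj'.ne', div_le_div_iff₀ (mul_pos hpi hpj') hvpos]
          have hA : v * v * (p j' - p (j' - 1)) ≤ v * v * e :=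
            mul_le_mul_of_nonneg_left hd (by positivity)
          have hB : v * v ≤ p (j' - 1) * p j' := mul_le_mul hvi hvj' hvpos.le hpi.le
          have hC := mul_le_mul_of_nonneg_right hB he0.le
          linarith [hA, hC]
        linarith [h4, h5, h6]
  -- x in terms of a
  have hxa : ∀ u ∈ T, x u = a u / p u := by
    intro u hu
    have hus : u ∈ s := ((hTmem u).1 hu).1
    have hpu : (p u) ≠ 0 := (hppos u hus).ne'
    rw [ha, mul_comm, mul_div_assoc, div_self hpu, mul_one]
  -- main induction
  have main : ∀ j', j' ∈ T → 2 * (∑ u ∈ T.filter (fun w => w ≤ j'), x u) ≤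
      a i₀ / p i₀ + a j' / p j' + v * ((1 / p i₀)^2 - (1 / p j')^2)
        + (2*e/v) * (1 / p i₀ - 1 / p j') := by
    intro j'
    induction j' using Nat.strong_induction_on with
    | _ j' ih =>
      intro hj'T
      by_cases hji : j' = i₀
      · subst hji
        have hfil : T.filter (fun w => w ≤ j') = {j'} := by
          ext u
          simp only [Finset.mem_filter, Finset.mem_singleton]
          constructor
          · rintro ⟨huT, hule⟩
            exact le_antisymm hule (hminle u huT)
          · rintro rfl; exact ⟨hj'T, le_refl _⟩
        rw [hfil, Finset.sum_singleton, hxa j' hj'T]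
        linarith [le_refl (a j' / p j')]
      · have hij : i₀ < j' := lt_of_le_of_ne (hminle j' hj'T) (Ne.symm hji)
        have hTlt : (T.filter (fun w => w < j')).Nonempty :=
          ⟨i₀, Finset.mem_filter.2 ⟨hi₀T, hij⟩⟩
        obtain ⟨j, hjdef⟩ : ∃ n : ℕ, n = (T.filter (fun w => w < j')).max' hTlt := ⟨_, rfl⟩
        have hjmem : j ∈ T.filter (fun w => w < j') := by
          rw [hjdef]; exact Finset.max'_mem _ hTlt
        have hjT : j ∈ T := (Finset.mem_filter.1 hjmem).1
        have hjlt : j < j' := (Finset.mem_filter.1 hjmem).2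
        have hjs : j ∈ s := ((hTmem j).1 hjT).1
        have hj's : j' ∈ s := ((hTmem j').1 hj'T).1
        have hjmax : ∀ u ∈ T, u < j' → u ≤ j := by
          intro u huT hult
          have h9 : u ≤ (T.filter (fun w => w < j')).max' hTlt :=
            Finset.le_max' (T.filter (fun w => w < j')) u (Finset.mem_filter.2 ⟨huT, hult⟩)
          rw [← hjdef] at h9
          exact h9
        have hbet : ∀ u ∈ s, j < u → u < j' → x u = 0 := by
          intro u hu h1 h2
          rcases eq_or_lt_of_le (hx0 u) with h | h
          · exact h.symm
          · have huT : u ∈ T := (hTmem u).2 ⟨hu, h⟩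
            have := hjmax u huT h2
            omega
        obtain ⟨hpair, hgap⟩ := hconsec j j' hjT hj'T hjlt hbet
        have hsplit : T.filter (fun w => w ≤ j') = insert j' (T.filter (fun w => w ≤ j)) := by
          ext u
          simp only [Finset.mem_filter, Finset.mem_insert]
          constructor
          · rintro ⟨huT, hule⟩
            by_cases hu : u = j'
            · exact Or.inl hu
            · exact Or.inr ⟨huT, hjmax u huT (by omega)⟩
          · rintro (rfl | ⟨huT, hule⟩)
            · exact ⟨hj'T, le_refl _⟩
            · exact ⟨huT, by omega⟩
        have hnotmem : j' ∉ T.filter (fun w => w ≤ j) := by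
          simp only [Finset.mem_filter]
          rintro ⟨_, h⟩; omega
        rw [hsplit, Finset.sum_insert hnotmem]
        have IH := ih j hjlt hjT
        have hpj : 0 < p j := hppos j hjs
        have hpj' : 0 < p j' := hppos j' hj's
        have hpjj' : p j ≤ p j' := hple j hjs j' hj's hjlt.le
        have hBle : 1 / p j' ≤ 1 / p j := one_div_le_one_div_of_le hpj hpjj'
        have haj' : 0 ≤ a j' := ha0 j' hj's
        have hstep : 2 * x j' ≤ a j' / p j' - a j / p j
            + v * ((1 / p j)^2 - (1 / p j')^2) + (2*e/v) * (1 / p j - 1 / p j') := by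
          obtain ⟨B, hB⟩ : ∃ b : ℝ, b = 1 / p j := ⟨_, rfl⟩
          obtain ⟨B', hB'⟩ : ∃ b : ℝ, b = 1 / p j' := ⟨_, rfl⟩
          obtain ⟨c, hc⟩ : ∃ b : ℝ, b = e / v := ⟨_, rfl⟩
          have hBle' : B' ≤ B := by rw [hB, hB']; exact hBle
          have hgapB : v * B - v * B' ≤ 2 * c := by
            rw [hB, hB', hc, mul_one_div, mul_one_div]
            have hh := hgap
            rw [mul_div_assoc] at hh
            exact hh
          have hpairB : a j + a j' = 2 * (v * B - v * B') := by
            rw [hB, hB', mul_one_div, mul_one_div]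
            exact hpair
          have f1 : 0 ≤ (B - B') * a j' := mul_nonneg (by linarith [hBle']) haj'
          have f2 : (B - B') * (v * B - v * B') ≤ (B - B') * (2 * c) :=
            mul_le_mul_of_nonneg_left hgapB (by linarith [hBle'])
          have f3 : (a j + a j') * B = (2 * (v * B - v * B')) * B := by
            rw [hpairB]
          rw [hxa j' hj'T, div_eq_mul_one_div (a j') (p j'), div_eq_mul_one_div (a j) (p j),
            show 2*e/v = 2*c by rw [hc, ← mul_div_assoc], ← hB, ← hB']
          linarith only [f1, f2, f3]
        linarith only [IH, hstep]
  -- final assembly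
  have hfilT : T.filter (fun w => w ≤ M) = T := by
    apply Finset.filter_true_of_mem
    intro u hu; exact hlemax u hu
  have hsumT : ∑ u ∈ T, x u = 1 := by
    rw [hTdef]
    rw [Finset.sum_filter_of_ne (fun u _ hne => lt_of_le_of_ne (hx0 u) (Ne.symm hne))]
    exact hx1
  have hmain := main M hMT
  rw [hfilT, hsumT] at hmain
  have hpM : 0 < p M := hppos M hMs
  have hvM : v ≤ p M := hvlepj M hMs (hminle M hMT)
  have hpM1 : p M ≤ 1 := hp1' M hMs
  have haM : a M ≤ 2*e/v := hatom M hMT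
  have hai₀ : a i₀ ≤ 2*e/v := hatom i₀ hi₀T
  have t1 : a i₀ / p i₀ ≤ (2*e/v) / v :=
    div_le_div₀ (by positivity) hai₀ hvpos hvlep
  have t2 : a M / p M ≤ (2*e/v) / v :=
    div_le_div₀ (by positivity) haM hvpos hvM
  have t3 : 1 / p i₀ ≤ 1 / v := one_div_le_one_div_of_le hvpos hvlep
  have t4 : (1 / p i₀)^2 ≤ (1/v)^2 := pow_le_pow_left₀ (by positivity) t3 2
  have t5 : 1 ≤ (1 / p M)^2 := by
    have h : 1 ≤ 1 / p M := by rw [le_div_iff₀ hpM]; linarith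
    nlinarith [h]
  have t6 : 0 < 1 / p M := by positivity
  have t7 : 0 < 2*e/v := by positivity
  have hcomb : 2 ≤ 2*((2*e/v)/v) + v * ((1/v)^2 - 1) + (2*e/v) * (1/v) := by
    have m1 : v * ((1 / p i₀)^2 - (1 / p M)^2) ≤ v * ((1/v)^2 - 1) :=
      mul_le_mul_of_nonneg_left (by linarith [t4, t5]) hvpos.le
    have m2 : (2*e/v) * (1 / p i₀ - 1 / p M) ≤ (2*e/v) * (1/v) :=
      mul_le_mul_of_nonneg_left (by linarith [t3, t6]) t7.le
    linarith only [hmain, t1, t2, m1, m2]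
  have hvne : v ≠ 0 := hvpos.ne'
  have hkey : v^3 + 2*v^2 - v ≤ 6*e := by
    have hvv : (0:ℝ) < v * v := mul_pos hvpos hvpos
    have hrw : 2*((2*e/v)/v) + v * ((1/v)^2 - 1) + (2*e/v) * (1/v) = (6*e + v - v^3)/(v*v) := by
      field_simp
      ring
    rw [hrw, le_div_iff₀ hvv] at hcomb
    linarith only [hcomb]
  -- final numeric step
  have hs22 : Real.sqrt 2 ^ 2 = 2 := Real.sq_sqrt (by norm_num)
  have hs20 : 0 ≤ Real.sqrt 2 := Real.sqrt_nonneg 2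
  have hs2low : 1.414 ≤ Real.sqrt 2 := by nlinarith [hs22, hs20]
  have hs2up : Real.sqrt 2 ≤ 1.415 := by nlinarith [hs22, hs20]
  have hse2 : Real.sqrt e ^ 2 = e := Real.sq_sqrt he0.le
  have hse0 : 0 < Real.sqrt e := Real.sqrt_pos.2 he0
  have hseub : Real.sqrt e ≤ 0.41 := by nlinarith [hse2, he6, hse0]
  by_contra hcontra
  push_neg at hcontra
  have h1 : Real.sqrt 2 + 5*Real.sqrt e ≤ v + 1 := by linarith
  have h2 : (Real.sqrt 2 + 5*Real.sqrt e)^2 ≤ (v+1)^2 :=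
    pow_le_pow_left₀ (by positivity) h1 2
  have hA : 10 * Real.sqrt 2 * Real.sqrt e + 25 * Real.sqrt e ^ 2 ≤ v^2 + 2*v - 1 := by
    linarith only [h2, hs22]
  have hApos : 0 ≤ v^2 + 2*v - 1 := by
    have hq1 : 0 ≤ Real.sqrt 2 * Real.sqrt e := mul_nonneg hs20 hse0.le
    linarith only [hA, hq1, sq_nonneg (Real.sqrt e)]
  have hB : (Real.sqrt 2 - 1) * (v^2 + 2*v - 1) ≤ v * (v^2 + 2*v - 1) :=
    mul_le_mul_of_nonneg_right (by linarith [hcontra, hse0]) hApos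
  have hC : v * (v^2 + 2*v - 1) ≤ 6 * Real.sqrt e ^ 2 := by
    have h6e : 6*e = 6 * Real.sqrt e ^ 2 := by rw [hse2]
    linarith only [hkey, h6e]
  have hD : (Real.sqrt 2 - 1) * (10 * Real.sqrt 2 * Real.sqrt e + 25 * Real.sqrt e ^ 2)
      ≤ (Real.sqrt 2 - 1) * (v^2 + 2*v - 1) :=
    mul_le_mul_of_nonneg_left hA (by linarith [hs2low])
  have hE : Real.sqrt 2 * Real.sqrt e ≤ 1.415 * Real.sqrt e :=
    mul_le_mul_of_nonneg_right hs2up hse0.le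
  have hG : 0 ≤ (Real.sqrt 2 - 1) * Real.sqrt e ^ 2 :=
    mul_nonneg (by linarith [hs2low]) (sq_nonneg _)
  have hH : Real.sqrt e ^ 2 ≤ 0.41 * Real.sqrt e := by
    have hq := mul_le_mul_of_nonneg_right hseub hse0.le
    linarith only [hq]
  have hI : Real.sqrt 2 ^ 2 * Real.sqrt e = 2 * Real.sqrt e := by rw [hs22]
  linarith only [hD, hB, hC, hE, hG, hH, hI, hse0]
end

section
/- In any n-player stingy quantum race (n ≥ 2) with coinciding Nash equilibrium supported on {T*,...,K}, each player's winning probability (1/z_{T*})^{n−1} is strictly less than 1/n. -/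
/-!
Put `a t = P_t ^ (-1/(n-1))`, so that `a t ^ (n-1) = 1 / P t`. Then
`q t = (a (t-1) - a t) * a t ^ (n-1)`, and the definition of `r` telescopes to
`z = a T* + P T* * r T*`, i.e. `r T* = (z - a T*) * a T* ^ (n-1)`. Hence
`z = r T* + ∑ q t` is a left Riemann-type sum of `x ↦ x ^ (n-1)` along the points
`z, a T*, a (T*+1), …, a K` (all positive). The tangent-line inequality `n (u - v) v^(n-1) ≤ u^n - v^n`
of the convex function `x ↦ x ^ n` summed over these points gives
`n z ≤ z ^ n - a K ^ n < z ^ n`, that is `n < z ^ (n-1)`.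
-/

open Finset

lemma sum_Ioc_pred_sub {M : Type*} [AddCommGroup M] (f : ℕ → M) {m N : ℕ} (h : m ≤ N) :
    ∑ t ∈ Ioc m N, (f (t - 1) - f t) = f m - f N := by
  induction N, h using Nat.le_induction with
  | base => simp
  | succ N hN ih =>
    rw [sum_Ioc_succ_top hN, ih, Nat.add_sub_cancel]
    abel

section TangentLine

variable {R : Type*} [CommRing R] [LinearOrder R] [IsStrictOrderedRing R]

lemma natCast_mul_sub_mul_pow_pred_le {u v : R} (hv : 0 ≤ v) (huv : 0 ≤ u + v) (n : ℕ) :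
    n * ((u - v) * v ^ (n - 1)) ≤ u ^ n - v ^ n := by
  have := pow_add_mul_le_add_pow hv (b := u - v) (by linarith) n
  rw [add_sub_cancel] at this
  linarith

lemma natCast_mul_sum_Ioc_le_pow_sub_pow {x : ℕ → R} {m N : ℕ} (hmN : m ≤ N) (n : ℕ)
    (hx : ∀ t ∈ Icc m N, 0 ≤ x t) :
    n * ∑ t ∈ Ioc m N, (x (t - 1) - x t) * x t ^ (n - 1) ≤ x m ^ n - x N ^ n := by
  rw [← sum_Ioc_pred_sub (fun t => x t ^ n) hmN, mul_sum]
  refine sum_le_sum fun t ht => ?_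
  rw [mem_Ioc] at ht
  exact natCast_mul_sub_mul_pow_pred_le (hx t (by simp; omega))
    (add_nonneg (hx (t - 1) (by simp; omega)) (hx t (by simp; omega))) n

lemma natCast_lt_pow_pred_of_eq_add_sum {x : ℕ → R} {m N n : ℕ} {z : R} (hmN : m ≤ N)
    (hn : n ≠ 0) (hx : ∀ t ∈ Icc m N, 0 < x t) (hxz : x m ≤ z)
    (h : z = (z - x m) * x m ^ (n - 1) + ∑ t ∈ Ioc m N, (x (t - 1) - x t) * x t ^ (n - 1)) :
    (n : R) < z ^ (n - 1) := by
  have hxm : 0 < x m := hx m (by simp [hmN])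
  have hz : 0 < z := hxm.trans_le hxz
  have hfirst := natCast_mul_sub_mul_pow_pred_le hxm.le (by linarith) n (u := z)
  have hrest := natCast_mul_sum_Ioc_le_pow_sub_pow hmN n fun t ht => (hx t ht).le
  have hxN : 0 < x N ^ n := pow_pos (hx N (by simp [hmN])) n
  have hnz : n * z < z ^ (n - 1) * z := by
    rw [← pow_succ, Nat.sub_add_cancel (Nat.one_le_iff_ne_zero.2 hn)]
    nth_rw 1 [h]
    linarith
  exact lt_of_mul_lt_mul_right hnz hz.le

end TangentLine

lemma rpow_neg_one_div_sub_one_pow_sub_one {p : ℝ} (hp : 0 < p) {n : ℕ} (hn : 2 ≤ n) :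
    (p ^ (-(1:ℝ) / ((n:ℝ) - 1))) ^ (n - 1) = p⁻¹ := by
  have hcast : ((n - 1 : ℕ) : ℝ) = (n:ℝ) - 1 := by
    rw [Nat.cast_sub (by omega), Nat.cast_one]
  have hne : (n:ℝ) - 1 ≠ 0 := by
    rw [← hcast]; exact_mod_cast (by omega : n - 1 ≠ 0)
  rw [← Real.rpow_natCast, ← Real.rpow_mul hp.le, hcast, div_mul_cancel₀ _ hne,
    Real.rpow_neg_one]

lemma add_sum_sub_eq_mul_of_mul_eq_sub {P q a : ℕ → ℝ} {T K : ℕ} {r : ℝ} (hTK : T ≤ K)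
    (hPq : ∀ t ∈ Ioc T K, P t * q t = a (t - 1) - a t) (hPT : 1 - P T ≠ 0)
    (hr : r = 1 / (1 - P T) * (a K - ∑ t ∈ Ioc T K, (1 - P t) * q t)) :
    r + ∑ t ∈ Ioc T K, q t - a T = P T * r := by
  have hsum : ∑ t ∈ Ioc T K, (1 - P t) * q t = ∑ t ∈ Ioc T K, q t - (a T - a K) := by
    rw [← sum_Ioc_pred_sub a hTK, ← sum_congr rfl hPq, ← sum_sub_distrib]
    simp only [sub_mul, one_mul]
  rw [hr, hsum]
  field_simp
  ring

theorem stmt_17_general (n K : ℕ) (P q r z : ℕ → ℝ) (Tstar : ℕ)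
    (hn : 2 ≤ n)
    (hP1 : 0 < P 1)
    (hPmono : ∀ i j, 1 ≤ i → i < j → j ≤ K → P i < P j)
    (hq : ∀ i, q i = (1 / P i) *
      ((P (i-1)) ^ (-(1:ℝ)/((n:ℝ)-1)) - (P i) ^ (-(1:ℝ)/((n:ℝ)-1))))
    (hr : ∀ T, r T = (1 / (1 - P T)) *
      ((P K) ^ (-(1:ℝ)/((n:ℝ)-1)) - ∑ i ∈ Finset.Icc (T+1) K, (1 - P i) * q i))
    (hz : ∀ T, z T = r T + ∑ i ∈ Finset.Icc (T+1) K, q i)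
    (hT1 : 1 ≤ Tstar) (hT2 : Tstar ≤ K) (hT3 : 0 < r Tstar) :
    (1 / z Tstar) ^ (n - 1) < 1 / (n : ℝ) := by
  have hP : ∀ t ∈ Icc Tstar K, 0 < P t := fun t ht => by
    rw [mem_Icc] at ht
    rcases (hT1.trans ht.1).eq_or_lt with h | h
    · exact h ▸ hP1
    · exact hP1.trans (hPmono 1 t le_rfl h ht.2)
  set a : ℕ → ℝ := fun i => P i ^ (-(1:ℝ) / ((n:ℝ) - 1))
  have ha_pos : ∀ t ∈ Icc Tstar K, 0 < a t := fun t ht => Real.rpow_pos_of_pos (hP t ht) _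
  have ha_pow : ∀ t ∈ Icc Tstar K, a t ^ (n - 1) = (P t)⁻¹ := fun t ht =>
    rpow_neg_one_div_sub_one_pow_sub_one (hP t ht) hn
  have hPq : ∀ t ∈ Ioc Tstar K, P t * q t = a (t - 1) - a t := fun t ht => by
    rw [hq, ← mul_assoc, mul_one_div_cancel (hP t (Ioc_subset_Icc_self ht)).ne', one_mul]
  have hcancel : ∀ t ∈ Icc Tstar K, ∀ y, y = P t * y * a t ^ (n - 1) := fun t ht y => by
    rw [ha_pow t ht, mul_comm (P t), mul_assoc, mul_inv_cancel₀ (hP t ht).ne', mul_one]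
  have hq' : ∀ t ∈ Ioc Tstar K, q t = (a (t - 1) - a t) * a t ^ (n - 1) := fun t ht => by
    rw [← hPq t ht]; exact hcancel t (Ioc_subset_Icc_self ht) (q t)
  have hPT : 1 - P Tstar ≠ 0 := fun h => by simp [hr, h] at hT3
  have hzr : z Tstar - a Tstar = P Tstar * r Tstar := by
    rw [hz, Icc_add_one_left_eq_Ioc]
    exact add_sum_sub_eq_mul_of_mul_eq_sub hT2 hPq hPT (by rw [hr, Icc_add_one_left_eq_Ioc])
  have hr' : r Tstar = (z Tstar - a Tstar) * a Tstar ^ (n - 1) := by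
    rw [hzr]; exact hcancel Tstar (by simp [hT2]) (r Tstar)
  have hlt : (n : ℝ) < z Tstar ^ (n - 1) := by
    refine natCast_lt_pow_pred_of_eq_add_sum hT2 (by omega) ha_pos ?_ ?_
    · nlinarith [hP Tstar (by simp [hT2])]
    · rw [← hr', ← sum_congr rfl hq', ← Icc_add_one_left_eq_Ioc, hz]
  rw [one_div_pow]
  exact one_div_lt_one_div_of_lt (by positivity) hlt

theorem stmt_17 (n K : ℕ) (P q r z : ℕ → ℝ) (Tstar : ℕ)
    (hn : 2 ≤ n) (hK : 2 ≤ K)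
    (hP1 : 0 < P 1) (hPK : P K ≤ 1)
    (hPmono : ∀ i j, 1 ≤ i → i < j → j ≤ K → P i < P j)
    (hq : ∀ i, q i = (1 / P i) *
      ((P (i-1)) ^ (-(1:ℝ)/((n:ℝ)-1)) - (P i) ^ (-(1:ℝ)/((n:ℝ)-1))))
    (hr : ∀ T, r T = (1 / (1 - P T)) *
      ((P K) ^ (-(1:ℝ)/((n:ℝ)-1)) - ∑ i ∈ Finset.Icc (T+1) K, (1 - P i) * q i))
    (hz : ∀ T, z T = r T + ∑ i ∈ Finset.Icc (T+1) K, q i)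
    (hT1 : 1 ≤ Tstar) (hT2 : Tstar ≤ K) (hT3 : 0 < r Tstar)
    (hT4 : ∀ T, 1 ≤ T → T < Tstar → r T ≤ 0) :
    (1 / z Tstar) ^ (n - 1) < 1 / (n : ℝ) :=
  stmt_17_general n K P q r z Tstar hn hP1 hPmono hq hr hz hT1 hT2 hT3
end
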